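/- arXiv:1806.00320 — 7 statements merged into one kernel-verified Lean document; each statement's English description precedes it below -/
import Mathlib

section
/- Let D = {(i,j) ∈ Fin n × Fin n | i < j} be the complete DAG on Fin n. Then for every choice of distinct i0, j0 and every S ⊆ Fin n with i0, j0 ∉ S, the partial derivatives of f have no common real zero: for every a ∈ ℝ^D there exists an edge e ∈ D with (∂f/∂X_e)(a) ≠ 0. In particular the hypersurface {a ∈ ℝ^D : f(a) = 0} is nonsingular. -/
open MvPolynomial Matrix

noncomputable section

/-- The matrix of variables of the DAG with edge set `D`. -/
def edgeMatrix (n : ℕ) (D : Finset (Fin n × Fin n)) :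
    Matrix (Fin n) (Fin n) (MvPolynomial {e // e ∈ D} ℝ) :=
  Matrix.of fun i j => if h : (i, j) ∈ D then X ⟨(i, j), h⟩ else 0

/-- `Σ = (I - A)⁻ᵀ (I - A)⁻¹` over the polynomial ring. -/
def sigmaMat (n : ℕ) (D : Finset (Fin n × Fin n)) :
    Matrix (Fin n) (Fin n) (MvPolynomial {e // e ∈ D} ℝ) :=
  ((1 - edgeMatrix n D)ᵀ)⁻¹ * (1 - edgeMatrix n D)⁻¹

/-- `det M[I,J]`, rows and columns in increasing order. -/
def subdet {α : Type*} [CommRing α] {n : ℕ} (M : Matrix (Fin n) (Fin n) α)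
    (I J : Finset (Fin n)) : α :=
  if h : I.card = J.card then
    (M.submatrix (fun p : Fin I.card => ((I.orderIsoOfFin rfl) p : Fin n))
      (fun p : Fin I.card => ((J.orderIsoOfFin h.symm) p : Fin n))).det
  else 0

/-- `f = det Σ[S ∪ {i0}, S ∪ {j0}]`. -/
def fpoly (n : ℕ) (D : Finset (Fin n × Fin n)) (i0 j0 : Fin n) (S : Finset (Fin n)) :
    MvPolynomial {e // e ∈ D} ℝ :=
  subdet (sigmaMat n D) (insert i0 S) (insert j0 S)

/-- `t` is below `v`: there is a directed path of length ≥ 1 from `v` to `t`. -/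
def Below {n : ℕ} (D : Finset (Fin n × Fin n)) (v t : Fin n) : Prop :=
  Relation.TransGen (fun i j => (i, j) ∈ D) v t

end

/-!
Write `W = 1 - A`, so that `Σ = W⁻ᵀ W⁻¹`, and suppose `i0 < j0`. Move the point `a` in the
direction `c` with `c (i0, t) = W(a) j0 t` and all other coordinates zero; it is supported on the
edges because `W(a)` is upper unitriangular and the DAG is complete. Over the dual numbers this
replaces `W` by `(1 - ε E_{i0 j0}) W(a)`, hence `Σ` by `(1 + ε E_{j0 i0}) Σ(a) (1 + ε E_{i0 j0})`.
Since `j0` indexes no row of the minor, only its column `j0` moves, by `ε` times column `i0`: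
the directional derivative `∑ₑ cₑ ∂f/∂Xₑ (a)` is, up to a permutation of columns, the principal
minor `det Σ(a)[S ∪ {i0}, S ∪ {i0}]`, which is nonzero since `Σ(a)` is positive definite. The case
`j0 < i0` follows from the symmetry of `Σ`.
-/

open DualNumber TrivSqZeroExt

theorem MvPolynomial.aeval_inl_add_smul_eps {σ R : Type*} [Fintype σ] [CommRing R]
    (a c : σ → R) (p : MvPolynomial σ R) :
    aeval (fun i => (inl (a i) + c i • ε : R[ε])) p =
      inl (eval a p) + (∑ i, c i * eval a (pderiv i p)) • ε := by
  classical
  induction p using MvPolynomial.induction_on with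
  | C r => simp [algebraMap_eq_inl]
  | add p q hp hq =>
    rw [map_add, hp, hq]
    ext <;> simp [Finset.sum_add_distrib, mul_add]
  | mul_X p i hp =>
    rw [map_mul, hp, aeval_X]
    ext
    · simp [mul_comm]
    · simp [Pi.single_apply, apply_ite (eval a), Finset.sum_add_distrib, Finset.sum_mul, mul_add]
      rw [add_comm]
      exact congrArg _ (Finset.sum_congr rfl fun _ _ => by ring)

theorem Finset.injective_update_of_mem_insert {α m : Type*} [DecidableEq α] [DecidableEq m]
    {S : Finset α} {i j : α} (hiS : i ∉ S) {γ : m → α} (hγ : Function.Injective γ)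
    (hγS : ∀ q, γ q ∈ insert j S) {q₀ : m} (hq₀ : γ q₀ = j) :
    Function.Injective (Function.update γ q₀ i) ∧ ∀ q, Function.update γ q₀ i q ∈ insert i S := by
  have hS : ∀ q ≠ q₀, γ q ∈ S := fun q hq =>
    (mem_insert.mp (hγS q)).resolve_left fun h => hq (hγ (h.trans hq₀.symm))
  refine ⟨fun x y hxy => ?_, fun q => ?_⟩
  · by_cases hx : x = q₀ <;> by_cases hy : y = q₀
    · rw [hx, hy]
    · subst hx
      rw [Function.update_self, Function.update_of_ne hy] at hxy
      exact absurd (hxy ▸ hS y hy) hiS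
    · subst hy
      rw [Function.update_self, Function.update_of_ne hx] at hxy
      exact absurd (hxy ▸ hS x hx) hiS
    · rw [Function.update_of_ne hx, Function.update_of_ne hy] at hxy
      exact hγ hxy
  · by_cases hq : q = q₀
    · subst hq
      simp
    · simp [Function.update_of_ne hq, hS q hq]

namespace Matrix

theorem submatrix_update_right {α ι m : Type*} [DecidableEq m] (M : Matrix ι ι α)
    (ρ γ : m → ι) (q : m) (k : ι) :
    M.submatrix ρ (Function.update γ q k) = (M.submatrix ρ γ).updateCol q fun p => M (ρ p) k := by
  ext p q'
  by_cases h : q' = q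
  · subst h
    simp
  · simp [h]

theorem PosDef.det_submatrix_ne_zero {ι m K : Type*} [Fintype m] [DecidableEq m] [Field K]
    [PartialOrder K] [StarRing K] {M : Matrix ι ι K} (hM : M.PosDef) {ρ γ : m → ι}
    (hρ : Function.Injective ρ) (hγ : Function.Injective γ) (hγρ : ∀ q, γ q ∈ Set.range ρ) :
    (M.submatrix ρ γ).det ≠ 0 := by
  set σ : m → m := fun q => (Equiv.ofInjective ρ hρ).symm ⟨γ q, hγρ q⟩
  have hρσ : ∀ q, ρ (σ q) = γ q := fun q => Equiv.apply_ofInjective_symm hρ _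
  have hσ : Function.Bijective σ := Finite.injective_iff_bijective.mp fun q q' h =>
    hγ (by rw [← hρσ, ← hρσ, h])
  have hperm : M.submatrix ρ γ = (M.submatrix ρ ρ).submatrix id (Equiv.ofBijective σ hσ) := by
    ext p q
    simp [hρσ]
  rw [hperm, det_permute']
  refine mul_ne_zero ?_ ((isUnit_iff_isUnit_det _).mp (hM.submatrix hρ).isUnit).ne_zero
  rcases Int.units_eq_one_or (Equiv.Perm.sign (Equiv.ofBijective σ hσ)) with h | h <;> simp [h]

theorem posDef_transpose_nonsing_inv_mul {ι : Type*} [Fintype ι] [DecidableEq ι]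
    {A : Matrix ι ι ℝ} (hA : IsUnit A.det) : (A⁻¹ᵀ * A⁻¹).PosDef := by
  rw [← conjTranspose_eq_transpose_of_trivial]
  exact .conjTranspose_mul_self _ (mulVec_injective_iff_isUnit.mpr
    (isUnit_nonsing_inv_iff.mpr ((isUnit_iff_isUnit_det A).mpr hA)))

variable {R ι : Type*} [CommRing R] [DecidableEq ι]

theorem transpose_transvection (i j : ι) (c : R) :
    (transvection i j c)ᵀ = transvection j i c := by
  simp [transvection, transpose_single]

variable [Fintype ι]

theorem inv_transvection {i j : ι} (h : i ≠ j) (c : R) :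
    (transvection i j c)⁻¹ = transvection i j (-c) :=
  inv_eq_right_inv (by
    rw [transvection_mul_transvection_same _ _ h, add_neg_cancel, transvection_zero])

theorem nonsing_inv_map {S F : Type*} [CommRing S] [FunLike F R S] [RingHomClass F R S] (f : F)
    {A : Matrix ι ι R} (h : IsUnit A.det) : A⁻¹.map f = (A.map f)⁻¹ := by
  refine (inv_eq_right_inv ?_).symm
  simpa using congrArg (RingHomClass.toRingHom f).mapMatrix (mul_nonsing_inv A h)

theorem submatrix_transvection_mul {m : Type*} {i : ι} (j : ι) (c : R) (M : Matrix ι ι R)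
    {ρ γ : m → ι} (hρ : ∀ p, ρ p ≠ i) :
    (transvection i j c * M).submatrix ρ γ = M.submatrix ρ γ := by
  ext p q
  simp [hρ p]

theorem det_submatrix_mul_transvection {m : Type*} [Fintype m] [DecidableEq m]
    (M : Matrix ι ι R) (i j : ι) (c : R) {ρ γ : m → ι} {q₀ : m} (hq₀ : γ q₀ = j)
    (hγ : ∀ q ≠ q₀, γ q ≠ j) :
    ((M * transvection i j c).submatrix ρ γ).det =
      (M.submatrix ρ γ).det + c * (M.submatrix ρ (Function.update γ q₀ i)).det := by
  have hcol : (M * transvection i j c).submatrix ρ γ =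
      (M.submatrix ρ γ).updateCol q₀ ((fun p => M (ρ p) j) + c • fun p => M (ρ p) i) := by
    ext p q
    by_cases h : q = q₀
    · subst h
      simp [hq₀]
    · simp [h, hγ q h]
  rw [hcol, det_updateCol_add, det_updateCol_smul, ← submatrix_update_right,
    ← submatrix_update_right, ← hq₀, Function.update_eq_self]

end Matrix

section DAG

variable {n : ℕ} {D : Finset (Fin n × Fin n)}

theorem det_one_sub_edgeMatrix (hD : ∀ e ∈ D, e.1 < e.2) : (1 - edgeMatrix n D).det = 1 := by
  have hlow : ∀ i j, ¬ i < j → (i, j) ∉ D := fun i j h he => h (hD _ he)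
  rw [det_of_isUpperTriangular fun i j (hji : j < i) => by
    simp [one_apply_ne hji.ne', edgeMatrix, hlow i j (not_lt.2 hji.le)]]
  simp [edgeMatrix, hlow _ _ (lt_irrefl _)]

theorem det_map_one_sub_edgeMatrix (hD : ∀ e ∈ D, e.1 < e.2) {K F : Type*} [CommRing K]
    [FunLike F (MvPolynomial D ℝ) K] [RingHomClass F (MvPolynomial D ℝ) K] (f : F) :
    ((1 - edgeMatrix n D).map f).det = 1 := by
  rw [← RingHom.coe_coe f, ← RingHom.mapMatrix_apply, ← RingHom.map_det,
    det_one_sub_edgeMatrix hD, map_one]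

theorem sigmaMat_eq : sigmaMat n D = (1 - edgeMatrix n D)⁻¹ᵀ * (1 - edgeMatrix n D)⁻¹ := by
  rw [sigmaMat, transpose_nonsing_inv]

theorem sigmaMat_transpose : (sigmaMat n D)ᵀ = sigmaMat n D := by
  rw [sigmaMat_eq, transpose_mul, transpose_transpose]

theorem map_sigmaMat (hD : ∀ e ∈ D, e.1 < e.2) {K F : Type*} [CommRing K]
    [FunLike F (MvPolynomial D ℝ) K] [RingHomClass F (MvPolynomial D ℝ) K] (f : F) :
    (sigmaMat n D).map f = ((1 - edgeMatrix n D).map f)⁻¹ᵀ * ((1 - edgeMatrix n D).map f)⁻¹ := by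
  have hW : IsUnit (1 - edgeMatrix n D).det := by
    rw [det_one_sub_edgeMatrix hD]
    exact isUnit_one
  rw [← RingHom.coe_coe f, sigmaMat_eq, Matrix.map_mul, transpose_map, nonsing_inv_map _ hW]

theorem subdet_transpose {α : Type*} [CommRing α] (M : Matrix (Fin n) (Fin n) α)
    (I J : Finset (Fin n)) : subdet Mᵀ J I = subdet M I J := by
  unfold subdet
  by_cases h : I.card = J.card
  · rw [dif_pos h.symm, dif_pos h, ← det_transpose, transpose_submatrix, transpose_transpose,
      ← det_submatrix_equiv_self (finCongr h)]
    congr 1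
  · rw [dif_neg (Ne.symm h), dif_neg h]

theorem fpoly_comm (i0 j0 : Fin n) (S : Finset (Fin n)) :
    fpoly n D j0 i0 S = fpoly n D i0 j0 S := by
  rw [fpoly, fpoly, ← subdet_transpose, sigmaMat_transpose]

theorem map_one_sub_edgeMatrix_apply {K : Type*} [Ring K] (f : MvPolynomial D ℝ →+* K)
    (r t : Fin n) :
    (1 - edgeMatrix n D).map f r t =
      (1 : Matrix (Fin n) (Fin n) K) r t - if h : (r, t) ∈ D then f (X ⟨(r, t), h⟩) else 0 := by
  by_cases h : (r, t) ∈ D <;> simp [edgeMatrix, h, one_apply, apply_ite f]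

noncomputable def transvectionDirection (D : Finset (Fin n × Fin n)) (a : D → ℝ) (i j : Fin n) :
    D → ℝ :=
  fun e => if e.1.1 = i then (1 - edgeMatrix n D).map (eval a) j e.1.2 else 0

theorem map_aeval_one_sub_edgeMatrix (hcomplete : ∀ p, p ∈ D ↔ p.1 < p.2) {i j : Fin n}
    (hij : i < j) (a : D → ℝ) :
    (1 - edgeMatrix n D).map
        (aeval fun e => (inl (a e) + transvectionDirection D a i j e • ε : ℝ[ε])) =
      transvection i j (-ε) * ((1 - edgeMatrix n D).map (eval a)).map inl := by
  have hA : ∀ r t, eval a (edgeMatrix n D r t) = if h : (r, t) ∈ D then a ⟨(r, t), h⟩ else 0 :=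
    fun r t => by by_cases h : (r, t) ∈ D <;> simp [edgeMatrix, h]
  ext r t : 1
  have hφ := map_one_sub_edgeMatrix_apply
    (aeval fun e => (inl (a e) + transvectionDirection D a i j e • ε : ℝ[ε])).toRingHom r t
  simp only [AlgHom.toRingHom_eq_coe, RingHom.coe_coe, aeval_X] at hφ
  rw [hφ]
  by_cases hr : r = i
  · subst hr
    simp only [transvection_mul_apply_same, map_apply]
    by_cases hrt : (r, t) ∈ D
    · ext <;> simp [hA, hrt, transvectionDirection, one_apply, apply_ite fst, apply_ite snd]
    · have htr : t ≤ r := not_lt.mp fun h => hrt ((hcomplete _).mpr h)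
      have hjt : (j, t) ∉ D := fun h => (hcomplete _).mp h |>.not_ge (htr.trans hij.le)
      ext <;> simp [hA, hrt, hjt, one_apply, (htr.trans_lt hij).ne', apply_ite fst,
        apply_ite snd]
  · simp only [transvection_mul_apply_of_ne _ _ _ _ hr, map_apply]
    by_cases hrt : (r, t) ∈ D
    · ext <;> simp [hA, hrt, transvectionDirection, one_apply, hr, apply_ite fst, apply_ite snd]
    · ext <;> simp [hA, hrt, one_apply, apply_ite fst, apply_ite snd]

theorem map_aeval_sigmaMat (hcomplete : ∀ p, p ∈ D ↔ p.1 < p.2) {i j : Fin n}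
    (hij : i < j) (a : D → ℝ) :
    (sigmaMat n D).map (aeval fun e => (inl (a e) + transvectionDirection D a i j e • ε : ℝ[ε])) =
      transvection j i ε * ((sigmaMat n D).map (eval a)).map inl * transvection i j ε := by
  have hD : ∀ e ∈ D, e.1 < e.2 := fun e he => (hcomplete e).mp he
  have hinv : (((1 - edgeMatrix n D).map (eval a)).map inl)⁻¹ =
      ((1 - edgeMatrix n D).map (eval a))⁻¹.map (inl : ℝ → ℝ[ε]) :=
    (nonsing_inv_map (inlHom ℝ ℝ) (by rw [det_map_one_sub_edgeMatrix hD]; exact isUnit_one)).symm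
  have hmul : ∀ M N : Matrix (Fin n) (Fin n) ℝ,
      (M * N).map (inl : ℝ → ℝ[ε]) = M.map inl * N.map inl :=
    fun _ _ => Matrix.map_mul (f := inlHom ℝ ℝ)
  rw [map_sigmaMat hD, map_aeval_one_sub_edgeMatrix hcomplete hij a, Matrix.mul_inv_rev,
    inv_transvection hij.ne, neg_neg, hinv, transpose_mul, transpose_transvection,
    map_sigmaMat hD, hmul, ← transpose_map]
  simp only [Matrix.mul_assoc]

theorem sum_transvectionDirection_mul_eval_pderiv_det (hcomplete : ∀ p, p ∈ D ↔ p.1 < p.2)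
    {i j : Fin n} (hij : i < j) (a : D → ℝ) {m : Type*} [Fintype m] [DecidableEq m]
    {ρ γ : m → Fin n} (hρ : ∀ p, ρ p ≠ j) {q₀ : m} (hq₀ : γ q₀ = j) (hγ : ∀ q ≠ q₀, γ q ≠ j) :
    ∑ e, transvectionDirection D a i j e * eval a (pderiv e ((sigmaMat n D).submatrix ρ γ).det) =
      (((sigmaMat n D).map (eval a)).submatrix ρ (Function.update γ q₀ i)).det := by
  have h := congrArg snd
    (aeval_inl_add_smul_eps a (transvectionDirection D a i j) ((sigmaMat n D).submatrix ρ γ).det)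
  simp only [snd_add, snd_inl, snd_smul, snd_eps, zero_add, smul_eq_mul, mul_one] at h
  have hinl : ∀ γ' : m → Fin n,
      ((((sigmaMat n D).map (eval a)).map inl).submatrix ρ γ').det =
        (inl (((sigmaMat n D).map (eval a)).submatrix ρ γ').det : ℝ[ε]) := fun γ' =>
    (submatrix_map _ _ _ _).symm ▸ ((inlHom ℝ ℝ).map_det _).symm
  rw [← h, AlgHom.map_det, AlgHom.mapMatrix_apply, ← submatrix_map,
    map_aeval_sigmaMat hcomplete hij a, Matrix.mul_assoc, submatrix_transvection_mul _ _ _ hρ,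
    det_submatrix_mul_transvection _ _ _ _ hq₀ hγ, hinl, hinl]
  simp

theorem exists_eval_pderiv_fpoly_ne_zero_of_lt (hcomplete : ∀ p, p ∈ D ↔ p.1 < p.2)
    {i0 j0 : Fin n} (hlt : i0 < j0) {S : Finset (Fin n)} (hi0S : i0 ∉ S) (hj0S : j0 ∉ S)
    (a : D → ℝ) :
    ∃ e, eval a (pderiv e (fpoly n D i0 j0 S)) ≠ 0 := by
  classical
  have hD : ∀ e ∈ D, e.1 < e.2 := fun e he => (hcomplete e).mp he
  have hcard : (insert i0 S).card = (insert j0 S).card := by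
    rw [Finset.card_insert_of_notMem hi0S, Finset.card_insert_of_notMem hj0S]
  set ρ := (insert i0 S).orderEmbOfFin rfl
  set γ := (insert j0 S).orderEmbOfFin hcard.symm
  have hf : fpoly n D i0 j0 S = ((sigmaMat n D).submatrix ρ γ).det := by
    simp [fpoly, subdet, hcard, ρ, γ, Finset.coe_orderIsoOfFin_apply]
  obtain ⟨q₀, hq₀⟩ : j0 ∈ Set.range γ := by simp [γ, Finset.range_orderEmbOfFin]
  have hρ : ∀ p, ρ p ≠ j0 := fun p h => by
    have := Finset.orderEmbOfFin_mem (insert i0 S) rfl p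
    simp_all [ρ, hlt.ne']
  have hγ : ∀ q ≠ q₀, γ q ≠ j0 := fun q hq h => hq (γ.injective (h.trans hq₀.symm))
  obtain ⟨hinj, hmem⟩ := Finset.injective_update_of_mem_insert hi0S γ.injective
    (Finset.orderEmbOfFin_mem _ _) hq₀
  have hminor : (((sigmaMat n D).map (eval a)).submatrix ρ (Function.update γ q₀ i0)).det ≠ 0 := by
    rw [map_sigmaMat hD]
    refine (posDef_transpose_nonsing_inv_mul ?_).det_submatrix_ne_zero ρ.injective hinj
      fun q => by rw [Finset.range_orderEmbOfFin]; exact hmem q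
    rw [det_map_one_sub_edgeMatrix hD]
    exact isUnit_one
  rw [← sum_transvectionDirection_mul_eval_pderiv_det hcomplete hlt a hρ hq₀ hγ, ← hf] at hminor
  obtain ⟨e, -, he⟩ := Finset.exists_ne_zero_of_sum_ne_zero hminor
  exact ⟨e, right_ne_zero_of_mul he⟩

end DAG

/-- For the complete DAG on `Fin n`, for every choice of distinct `i0, j0` and every
`S` not containing them, the partial derivatives of `f` have no common real zero;
in particular `{a | f(a) = 0}` is nonsingular. -/
theorem statement1 (n : ℕ)
    (D : Finset (Fin n × Fin n)) (hD : D = Finset.univ.filter fun e => e.1 < e.2)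
    (i0 j0 : Fin n) (hne : i0 ≠ j0) (S : Finset (Fin n)) (hi0S : i0 ∉ S) (hj0S : j0 ∉ S)
    (a : {e // e ∈ D} → ℝ) :
    ∃ e : {e // e ∈ D}, MvPolynomial.eval a (MvPolynomial.pderiv e (fpoly n D i0 j0 S)) ≠ 0 := by
  have hcomplete : ∀ p, p ∈ D ↔ p.1 < p.2 := fun p => by simp [hD]
  rcases hne.lt_or_gt with hlt | hlt
  · exact exists_eval_pderiv_fpoly_ne_zero_of_lt hcomplete hlt hi0S hj0S a
  · rw [← fpoly_comm]
    exact exists_eval_pderiv_fpoly_ne_zero_of_lt hcomplete hlt hj0S hi0S a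
end

section
/- The map Φ given by Φ(a, d) = (a', ω) with a'_{(i,j)} = a_{(i,j)} · d_j / d_i for (i,j) ∈ D and ω_m = d_m² for m ∈ Fin n is a bijection from {a ∈ ℝ^D : f(a) = 0} × (ℝ_{>0})^n onto {(a', ω) ∈ ℝ^D × (ℝ_{>0})^n : f_Ω(a', ω) = 0}, with inverse given by (a', ω) ↦ (a, d) where a_{(i,j)} = a'_{(i,j)} · √ω_i / √ω_j and d_m = √ω_m. -/
open MvPolynomial Matrix

noncomputable section

/-- The real matrix of edge weights `a`. -/
def edgeMatrixR (n : ℕ) (D : Finset (Fin n × Fin n)) (a : {e // e ∈ D} → ℝ) :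
    Matrix (Fin n) (Fin n) ℝ :=
  Matrix.of fun i j => if h : (i, j) ∈ D then a ⟨(i, j), h⟩ else 0

/-- `Σ_Ω(a, ω) = (I - A(a))⁻ᵀ · diag(ω) · (I - A(a))⁻¹`. -/
def sigmaOm (n : ℕ) (D : Finset (Fin n × Fin n)) (a : {e // e ∈ D} → ℝ) (ω : Fin n → ℝ) :
    Matrix (Fin n) (Fin n) ℝ :=
  ((1 - edgeMatrixR n D a)ᵀ)⁻¹ * Matrix.diagonal ω * (1 - edgeMatrixR n D a)⁻¹

/-- `f_Ω(a, ω) = det Σ_Ω(a, ω)[S ∪ {i0}, S ∪ {j0}]`. -/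
def fOm (n : ℕ) (D : Finset (Fin n × Fin n)) (i0 j0 : Fin n) (S : Finset (Fin n))
    (a : {e // e ∈ D} → ℝ) (ω : Fin n → ℝ) : ℝ :=
  subdet (sigmaOm n D a ω) (insert i0 S) (insert j0 S)


/-! Conjugation by `diag d` turns `I - A(a)` into `I - A(a')` with `a'_{ij} = a_{ij} d_j / d_i`,
so `Σ_Ω(a', d²) = diag d · Σ_Ω(a, 1) · diag d`, and every minor of `Σ_Ω(a', d²)` is the same minor
of `Σ_Ω(a, 1)` times a product of entries of `d`, nonzero when `d > 0`. Since `det (I - A) = 1`,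
evaluating the polynomial `Σ` at `a` gives `Σ_Ω(a, 1)`, so `f_Ω(Φ(a, d)) = 0 ↔ f(a) = 0`; the square
roots in the inverse formula undo `Φ` on positive `d`. -/
theorem Matrix.det_one_sub_eq_one_of_strictlyUpper {m R : Type*} [Fintype m] [DecidableEq m]
    [LinearOrder m] [CommRing R] (B : Matrix m m R) (hB : ∀ i j, j ≤ i → B i j = 0) :
    (1 - B).det = 1 := by
  have hupper : (1 - B).IsUpperTriangular :=
    (blockTriangular_one (b := id)).sub fun i j hji => hB i j hji.le
  rw [det_of_isUpperTriangular hupper]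
  exact Finset.prod_eq_one fun i _ => by simp [hB i i le_rfl]

theorem Matrix.map_nonsing_inv {m R S : Type*} [Fintype m] [DecidableEq m] [CommRing R]
    [CommRing S] (f : R →+* S) (M : Matrix m m R) (hM : IsUnit M.det) :
    M⁻¹.map f = (M.map f)⁻¹ := by
  refine (inv_eq_right_inv ?_).symm
  rw [← Matrix.map_mul, mul_nonsing_inv M hM, Matrix.map_one f (map_zero f) (map_one f)]

theorem RingHom.map_subdet {α β : Type*} [CommRing α] [CommRing β] (f : α →+* β) {n : ℕ}
    (M : Matrix (Fin n) (Fin n) α) (I J : Finset (Fin n)) :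
    f (subdet M I J) = subdet (M.map f) I J := by
  unfold subdet
  split_ifs
  · rw [RingHom.map_det, RingHom.mapMatrix_apply, submatrix_map]
  · exact map_zero f

theorem Finset.prod_orderIsoOfFin {M : Type*} [CommMonoid M] {n k : ℕ} (I : Finset (Fin n))
    (h : I.card = k) (d : Fin n → M) :
    ∏ p : Fin k, d (I.orderIsoOfFin h p) = ∏ i ∈ I, d i := by
  rw [← Finset.prod_coe_sort I d]
  exact (I.orderIsoOfFin h).toEquiv.prod_comp (fun i : I => d i)

theorem subdet_diagonal_mul_mul_diagonal {α : Type*} [CommRing α] {n : ℕ} (d e : Fin n → α)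
    (M : Matrix (Fin n) (Fin n) α) (I J : Finset (Fin n)) :
    subdet (diagonal d * M * diagonal e) I J
      = (∏ i ∈ I, d i) * (∏ j ∈ J, e j) * subdet M I J := by
  unfold subdet
  split_ifs with h
  · set r := fun p : Fin I.card => (I.orderIsoOfFin rfl p : Fin n)
    set c := fun p : Fin I.card => (J.orderIsoOfFin h.symm p : Fin n)
    have hsub : (diagonal d * M * diagonal e).submatrix r c
        = diagonal (fun p => d (r p)) * M.submatrix r c * diagonal (fun q => e (c q)) := by
      ext p q
      simp [mul_diagonal, diagonal_mul]
    rw [hsub, det_mul, det_mul, det_diagonal, det_diagonal, I.prod_orderIsoOfFin rfl d,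
      J.prod_orderIsoOfFin h.symm e]
    ring
  · rw [mul_zero]

section Rescaling

variable {n : ℕ} {D : Finset (Fin n × Fin n)}

theorem edgeMatrix_apply_eq_zero_of_le (hD : ∀ e ∈ D, e.1 < e.2) {i j : Fin n} (hji : j ≤ i) :
    edgeMatrix n D i j = 0 :=
  dif_neg fun h => (hD _ h).not_ge hji

theorem edgeMatrix_map_eval (a : {e // e ∈ D} → ℝ) :
    (edgeMatrix n D).map (eval a) = edgeMatrixR n D a := by
  ext i j
  simp only [edgeMatrix, edgeMatrixR, map_apply, of_apply]
  split_ifs <;> simp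

theorem sigmaMat_map_eval (hD : ∀ e ∈ D, e.1 < e.2) (a : {e // e ∈ D} → ℝ) :
    (sigmaMat n D).map (eval a) = sigmaOm n D a 1 := by
  have hdet : IsUnit (1 - edgeMatrix n D).det := by
    rw [det_one_sub_eq_one_of_strictlyUpper _ fun i j => edgeMatrix_apply_eq_zero_of_le hD]
    exact isUnit_one
  have hdetT : IsUnit (1 - edgeMatrix n D)ᵀ.det := by rwa [det_transpose]
  rw [sigmaMat, sigmaOm, Matrix.map_mul, map_nonsing_inv _ _ hdetT, map_nonsing_inv _ _ hdet,
    transpose_map, Matrix.map_sub _ (map_sub _), Matrix.map_one _ (map_zero _) (map_one _),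
    edgeMatrix_map_eval, Pi.one_def, diagonal_one, Matrix.mul_one]

theorem eval_fpoly (hD : ∀ e ∈ D, e.1 < e.2) (i0 j0 : Fin n) (S : Finset (Fin n))
    (a : {e // e ∈ D} → ℝ) :
    eval a (fpoly n D i0 j0 S) = fOm n D i0 j0 S a 1 := by
  rw [fpoly, fOm, RingHom.map_subdet, sigmaMat_map_eval hD]

theorem edgeMatrixR_rescale (a : {e // e ∈ D} → ℝ) (d : Fin n → ℝ) :
    edgeMatrixR n D (fun e => a e * d e.1.2 / d e.1.1)
      = diagonal d⁻¹ * edgeMatrixR n D a * diagonal d := by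
  ext i j
  simp only [edgeMatrixR, mul_diagonal, diagonal_mul, of_apply, Pi.inv_apply]
  split_ifs <;> simp [div_eq_inv_mul, mul_comm, mul_left_comm]

theorem sigmaOm_rescale (a : {e // e ∈ D} → ℝ) {d : Fin n → ℝ} (hd : ∀ m, d m ≠ 0)
    (ω : Fin n → ℝ) :
    sigmaOm n D (fun e => a e * d e.1.2 / d e.1.1) (fun m => d m ^ 2 * ω m)
      = diagonal d * sigmaOm n D a ω * diagonal d := by
  have hinv_mul : diagonal d⁻¹ * diagonal d = 1 := by
    rw [diagonal_mul_diagonal, ← diagonal_one]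
    exact congrArg diagonal (funext fun m => inv_mul_cancel₀ (hd m))
  have hmul_inv : diagonal d * diagonal d⁻¹ = 1 := mul_eq_one_comm.mp hinv_mul
  have hcancel : ∀ X, diagonal d⁻¹ * (diagonal d * X) = X := fun X => by
    rw [← Matrix.mul_assoc, hinv_mul, Matrix.one_mul]
  have hcancel' : ∀ X, diagonal d * (diagonal d⁻¹ * X) = X := fun X => by
    rw [← Matrix.mul_assoc, hmul_inv, Matrix.one_mul]
  have hω : diagonal (fun m => d m ^ 2 * ω m) = diagonal d * diagonal ω * diagonal d := by
    rw [diagonal_mul_diagonal, diagonal_mul_diagonal]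
    exact congrArg diagonal (funext fun m => by ring)
  have hconj : 1 - edgeMatrixR n D (fun e => a e * d e.1.2 / d e.1.1)
      = diagonal d⁻¹ * (1 - edgeMatrixR n D a) * diagonal d := by
    rw [edgeMatrixR_rescale, Matrix.mul_sub, Matrix.sub_mul, Matrix.mul_one, hinv_mul]
  rw [sigmaOm, sigmaOm, hconj, hω, transpose_mul, transpose_mul, diagonal_transpose,
    diagonal_transpose, Matrix.mul_inv_rev, Matrix.mul_inv_rev, Matrix.mul_inv_rev,
    Matrix.mul_inv_rev, inv_eq_left_inv hinv_mul, inv_eq_right_inv hinv_mul]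
  simp only [Matrix.mul_assoc, hcancel, hcancel']

theorem fOm_rescale (i0 j0 : Fin n) (S : Finset (Fin n)) (a : {e // e ∈ D} → ℝ)
    {d : Fin n → ℝ} (hd : ∀ m, d m ≠ 0) (ω : Fin n → ℝ) :
    fOm n D i0 j0 S (fun e => a e * d e.1.2 / d e.1.1) (fun m => d m ^ 2 * ω m)
      = (∏ i ∈ insert i0 S, d i) * (∏ j ∈ insert j0 S, d j) * fOm n D i0 j0 S a ω := by
  rw [fOm, sigmaOm_rescale a hd, subdet_diagonal_mul_mul_diagonal, fOm]

end Rescaling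

section Reparametrization

variable {n : ℕ} {D : Finset (Fin n × Fin n)}

def toOmegaParams (p : ({e // e ∈ D} → ℝ) × (Fin n → ℝ)) : ({e // e ∈ D} → ℝ) × (Fin n → ℝ) :=
  (fun e => p.1 e * p.2 e.1.2 / p.2 e.1.1, fun m => p.2 m ^ 2)

def ofOmegaParams (q : ({e // e ∈ D} → ℝ) × (Fin n → ℝ)) : ({e // e ∈ D} → ℝ) × (Fin n → ℝ) :=
  (fun e => q.1 e * √(q.2 e.1.1) / √(q.2 e.1.2), fun m => √(q.2 m))

theorem invOn_ofOmegaParams_toOmegaParams :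
    Set.InvOn (ofOmegaParams (D := D)) toOmegaParams
      {p | ∀ m, 0 < p.2 m} {q | ∀ m, 0 < q.2 m} := by
  constructor
  · rintro ⟨a, d⟩ hd
    have hsqrt : ∀ m, √(d m ^ 2) = d m := fun m => Real.sqrt_sq (hd m).le
    ext e <;> simp only [ofOmegaParams, toOmegaParams, hsqrt]
    field_simp [(hd e.1.1).ne', (hd e.1.2).ne']
  · rintro ⟨a, ω⟩ hω
    have hsqrt : ∀ m, √(ω m) ≠ 0 := fun m => (Real.sqrt_pos.2 (hω m)).ne'
    ext e <;> simp only [ofOmegaParams, toOmegaParams]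
    · field_simp [hsqrt e.1.1, hsqrt e.1.2]
    · exact Real.sq_sqrt (hω e).le

theorem fOm_toOmegaParams_eq_zero_iff (hD : ∀ e ∈ D, e.1 < e.2) (i0 j0 : Fin n)
    (S : Finset (Fin n)) (a : {e // e ∈ D} → ℝ) {d : Fin n → ℝ} (hd : ∀ m, 0 < d m) :
    fOm n D i0 j0 S (toOmegaParams (a, d)).1 (toOmegaParams (a, d)).2 = 0 ↔
      eval a (fpoly n D i0 j0 S) = 0 := by
  have h := fOm_rescale i0 j0 S a (fun m => (hd m).ne') 1
  simp only [Pi.one_apply, mul_one] at h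
  rw [toOmegaParams, h, eval_fpoly hD, mul_eq_zero_iff_left]
  exact mul_ne_zero (Finset.prod_pos fun i _ => hd i).ne' (Finset.prod_pos fun j _ => hd j).ne'

end Reparametrization

theorem statement2_general (n : ℕ) (D : Finset (Fin n × Fin n)) (hD : ∀ e ∈ D, e.1 < e.2)
    (i0 j0 : Fin n) (S : Finset (Fin n)) :
    Set.BijOn
      (fun p : ({e // e ∈ D} → ℝ) × (Fin n → ℝ) =>
        ((fun e => p.1 e * p.2 e.1.2 / p.2 e.1.1, fun m => p.2 m ^ 2) :
          ({e // e ∈ D} → ℝ) × (Fin n → ℝ)))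
      ({a | MvPolynomial.eval a (fpoly n D i0 j0 S) = 0} ×ˢ {d | ∀ m, 0 < d m})
      {q | fOm n D i0 j0 S q.1 q.2 = 0 ∧ ∀ m, 0 < q.2 m} ∧
    Set.InvOn
      (fun q : ({e // e ∈ D} → ℝ) × (Fin n → ℝ) =>
        ((fun e => q.1 e * Real.sqrt (q.2 e.1.1) / Real.sqrt (q.2 e.1.2),
          fun m => Real.sqrt (q.2 m)) : ({e // e ∈ D} → ℝ) × (Fin n → ℝ)))
      (fun p : ({e // e ∈ D} → ℝ) × (Fin n → ℝ) =>
        ((fun e => p.1 e * p.2 e.1.2 / p.2 e.1.1, fun m => p.2 m ^ 2) :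
          ({e // e ∈ D} → ℝ) × (Fin n → ℝ)))
      ({a | MvPolynomial.eval a (fpoly n D i0 j0 S) = 0} ×ˢ {d | ∀ m, 0 < d m})
      {q | fOm n D i0 j0 S q.1 q.2 = 0 ∧ ∀ m, 0 < q.2 m} := by
  have hinv : Set.InvOn ofOmegaParams toOmegaParams
      ({a | eval a (fpoly n D i0 j0 S) = 0} ×ˢ {d | ∀ m, 0 < d m})
      {q | fOm n D i0 j0 S q.1 q.2 = 0 ∧ ∀ m, 0 < q.2 m} :=
    invOn_ofOmegaParams_toOmegaParams.mono (fun _ hp => hp.2) (fun _ hq => hq.2)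
  refine ⟨hinv.bijOn ?_ ?_, hinv⟩
  · rintro ⟨a, d⟩ ⟨ha, hd⟩
    exact ⟨(fOm_toOmegaParams_eq_zero_iff hD i0 j0 S a hd).2 ha, fun m => pow_pos (hd m) 2⟩
  · rintro q ⟨hq, hω⟩
    have hpos : ∀ m, 0 < (ofOmegaParams q).2 m := fun m => Real.sqrt_pos.2 (hω m)
    refine ⟨(fOm_toOmegaParams_eq_zero_iff hD i0 j0 S _ hpos).1 ?_, hpos⟩
    rwa [← hinv.2 ⟨hq, hω⟩] at hq

/-- The map `Φ(a, d) = ((a_{ij} d_j / d_i)_{(i,j) ∈ D}, (d_m²)_m)` is a bijection from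
`H_f × ℝ_{>0}^n` onto `H_{f_Ω}`, with the stated inverse. -/
theorem statement2 (n : ℕ) (D : Finset (Fin n × Fin n)) (hD : ∀ e ∈ D, e.1 < e.2)
    (i0 j0 : Fin n) (hne : i0 ≠ j0) (S : Finset (Fin n)) (hi0S : i0 ∉ S) (hj0S : j0 ∉ S) :
    Set.BijOn
      (fun p : ({e // e ∈ D} → ℝ) × (Fin n → ℝ) =>
        ((fun e => p.1 e * p.2 e.1.2 / p.2 e.1.1, fun m => p.2 m ^ 2) :
          ({e // e ∈ D} → ℝ) × (Fin n → ℝ)))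
      ({a | MvPolynomial.eval a (fpoly n D i0 j0 S) = 0} ×ˢ {d | ∀ m, 0 < d m})
      {q | fOm n D i0 j0 S q.1 q.2 = 0 ∧ ∀ m, 0 < q.2 m} ∧
    Set.InvOn
      (fun q : ({e // e ∈ D} → ℝ) × (Fin n → ℝ) =>
        ((fun e => q.1 e * Real.sqrt (q.2 e.1.1) / Real.sqrt (q.2 e.1.2),
          fun m => Real.sqrt (q.2 m)) : ({e // e ∈ D} → ℝ) × (Fin n → ℝ)))
      (fun p : ({e // e ∈ D} → ℝ) × (Fin n → ℝ) =>
        ((fun e => p.1 e * p.2 e.1.2 / p.2 e.1.1, fun m => p.2 m ^ 2) :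
          ({e // e ∈ D} → ℝ) × (Fin n → ℝ)))
      ({a | MvPolynomial.eval a (fpoly n D i0 j0 S) = 0} ×ˢ {d | ∀ m, 0 < d m})
      {q | fOm n D i0 j0 S q.1 q.2 = 0 ∧ ∀ m, 0 < q.2 m} :=
  statement2_general n D hD i0 j0 S

end
end

section
/- For every a ∈ ℝ^D, ω ∈ (ℝ_{>0})^n and d ∈ (ℝ_{>0})^n one has diag(d) * Σ_Ω(a, ω) * diag(d) = Σ_Ω(a', ω'), where a'_{(i,j)} = d_i⁻¹ · a_{(i,j)} · d_j for each (i,j) ∈ D and ω'_m = d_m² · ω_m for each m ∈ Fin n. -/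
open Matrix

noncomputable section

/-!
Rescaling the edge weights by `a_{ij} ↦ d_i⁻¹ a_{ij} d_j` conjugates `I - A` by the diagonal
matrix `diag(d)`: `I - A' = diag(d)⁻¹ (I - A) diag(d)`. Inverting and transposing, the outer
factors of `Σ_Ω` pick up `diag(d)` on the outside and `diag(d)⁻¹` on the inside, and the two
inner `diag(d)⁻¹` absorb the factor `d_m²` of `ω'`.
-/

namespace Matrix

variable {ι K : Type*} [Fintype ι] [DecidableEq ι] [Field K]

theorem diagonal_inv_mul_diagonal {d : ι → K} (hd : ∀ i, d i ≠ 0) :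
    diagonal d⁻¹ * diagonal d = 1 := by
  rw [diagonal_mul_diagonal, ← diagonal_one]
  exact congrArg diagonal (funext fun i => inv_mul_cancel₀ (hd i))

theorem inv_diagonal_of_ne_zero {d : ι → K} (hd : ∀ i, d i ≠ 0) :
    (diagonal d)⁻¹ = diagonal d⁻¹ :=
  inv_eq_left_inv (diagonal_inv_mul_diagonal hd)

theorem inv_diagonal_inv_of_ne_zero {d : ι → K} (hd : ∀ i, d i ≠ 0) :
    (diagonal d⁻¹)⁻¹ = diagonal d := by
  simpa using inv_diagonal_of_ne_zero (d := d⁻¹) (by simpa using hd)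

theorem diagonal_inv_mul_diagonal_mul_diagonal_inv {d : ι → K} (hd : ∀ i, d i ≠ 0)
    (ω : ι → K) :
    diagonal d⁻¹ * diagonal (fun i => d i ^ 2 * ω i) * diagonal d⁻¹ = diagonal ω := by
  rw [diagonal_mul_diagonal, diagonal_mul_diagonal]
  exact congrArg diagonal (funext fun i => by simp only [Pi.inv_apply]; field_simp [hd i])

theorem inv_transpose_mul_diagonal_mul_inv_diagonal_conj {d : ι → K} (hd : ∀ i, d i ≠ 0)
    (B : Matrix ι ι K) (ω : ι → K) :
    ((diagonal d⁻¹ * B * diagonal d)ᵀ)⁻¹ * diagonal (fun i => d i ^ 2 * ω i) *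
        (diagonal d⁻¹ * B * diagonal d)⁻¹ =
      diagonal d * ((Bᵀ)⁻¹ * diagonal ω * B⁻¹) * diagonal d := by
  simp only [transpose_mul, diagonal_transpose, mul_inv_rev, inv_diagonal_of_ne_zero hd,
    inv_diagonal_inv_of_ne_zero hd]
  rw [← diagonal_inv_mul_diagonal_mul_diagonal_inv hd ω]
  simp only [Matrix.mul_assoc]

end Matrix

theorem edgeMatrixR_scale (n : ℕ) (D : Finset (Fin n × Fin n)) (a : {e // e ∈ D} → ℝ)
    (d : Fin n → ℝ) :
    edgeMatrixR n D (fun e => (d e.1.1)⁻¹ * a e * d e.1.2) =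
      diagonal d⁻¹ * edgeMatrixR n D a * diagonal d := by
  ext i j
  rw [mul_diagonal, diagonal_mul]
  simp only [edgeMatrixR, of_apply, Pi.inv_apply]
  split_ifs <;> ring

theorem statement3_general (n : ℕ) (D : Finset (Fin n × Fin n))
    (a : {e // e ∈ D} → ℝ) (ω d : Fin n → ℝ) (hd : ∀ m, 0 < d m) :
    Matrix.diagonal d * sigmaOm n D a ω * Matrix.diagonal d =
      sigmaOm n D (fun e => (d e.1.1)⁻¹ * a e * d e.1.2) (fun m => d m ^ 2 * ω m) := by
  have hd₀ : ∀ m, d m ≠ 0 := fun m => (hd m).ne'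
  have h_conj : 1 - edgeMatrixR n D (fun e => (d e.1.1)⁻¹ * a e * d e.1.2) =
      diagonal d⁻¹ * (1 - edgeMatrixR n D a) * diagonal d := by
    rw [edgeMatrixR_scale, Matrix.mul_sub, Matrix.sub_mul, Matrix.mul_one,
      diagonal_inv_mul_diagonal hd₀]
  rw [sigmaOm, sigmaOm, h_conj, inv_transpose_mul_diagonal_mul_inv_diagonal_conj hd₀]

/-- `diag(d) · Σ_Ω(a, ω) · diag(d) = Σ_Ω(a', ω')` with
`a'_{(i,j)} = d_i⁻¹ · a_{(i,j)} · d_j` and `ω'_m = d_m² · ω_m`. -/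
theorem statement3 (n : ℕ) (D : Finset (Fin n × Fin n)) (hD : ∀ e ∈ D, e.1 < e.2)
    (a : {e // e ∈ D} → ℝ) (ω d : Fin n → ℝ) (hω : ∀ m, 0 < ω m) (hd : ∀ m, 0 < d m) :
    Matrix.diagonal d * sigmaOm n D a ω * Matrix.diagonal d =
      sigmaOm n D (fun e => (d e.1.1)⁻¹ * a e * d e.1.2) (fun m => d m ^ 2 * ω m) :=
  statement3_general n D a ω d hd

end
end

section
/- If s ∈ S and (s,j) ∈ D, then the variable X_{(s,j)} does not occur in f; that is, (s,j) is not in the set of variables of the multivariate polynomial f. -/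
open MvPolynomial Matrix

/-!
Write `A = A₀ + x • single s j 1`, where `x = X_{(s,j)}` and `A₀` is `A` with `x` set to `0`.
Since `s < j`, the `(j, s)` entry of the upper triangular matrix `(1 - A₀)⁻¹` vanishes, so the
update is nilpotent and `(1 - A)⁻¹ = (1 - A₀)⁻¹ (1 + E)` with `E = x • single s j 1 * (1 - A₀)⁻¹`,
a matrix supported on row `s` with `E s s = 0`. Hence `Σ = (1 + E)ᵀ Σ₀ (1 + E)`, where `Σ₀` is `Σ`
with `x` set to `0`: `Σ` is obtained from `Σ₀` by adding multiples of row `s` to the other rows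
and of column `s` to the other columns. As `s` indexes both a row and a column of the minor,
these operations do not change it, so `f` equals `f` with `x` set to `0`.
-/

namespace Matrix

variable {ι R : Type*} [CommRing R]

section Fintype

variable [Fintype ι]

theorem map_nonsing_inv_s5 [DecidableEq ι] {S F : Type*} [CommRing S] [FunLike F R S]
    [RingHomClass F R S] (f : F) (M : Matrix ι ι R) (hM : IsUnit M.det) :
    M⁻¹.map f = (M.map f)⁻¹ :=
  (inv_eq_right_inv (by
    rw [← Matrix.map_mul, mul_nonsing_inv _ hM, Matrix.map_one _ (map_zero f) (map_one f)])).symm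

theorem inv_sub_eq_of_mul_inv_mul_eq_zero [DecidableEq ι] (M E : Matrix ι ι R)
    (hM : IsUnit M.det) (hE : E * M⁻¹ * E = 0) : (M - E)⁻¹ = M⁻¹ * (1 + E * M⁻¹) := by
  apply inv_eq_right_inv
  have hsq : E * M⁻¹ * (E * M⁻¹) = 0 := by rw [← Matrix.mul_assoc, hE, Matrix.zero_mul]
  calc (M - E) * (M⁻¹ * (1 + E * M⁻¹)) = (1 - E * M⁻¹) * (1 + E * M⁻¹) := by
        rw [← Matrix.mul_assoc, Matrix.sub_mul, mul_nonsing_inv _ hM]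
    _ = 1 := by
        rw [Matrix.sub_mul, Matrix.one_mul, Matrix.mul_add, Matrix.mul_one, hsq]
        abel

/-- Covariance matrix of the linear structural equation model with edge weights `M`;
`sigmaMat n D` is `lsemCov (edgeMatrix n D)` by definition. -/
noncomputable def lsemCov [DecidableEq ι] (M : Matrix ι ι R) : Matrix ι ι R := ((1 - M)ᵀ)⁻¹ * (1 - M)⁻¹

theorem map_lsemCov [DecidableEq ι] {S F : Type*} [CommRing S] [FunLike F R S]
    [RingHomClass F R S] (f : F) {M : Matrix ι ι R} (hM : IsUnit (1 - M).det) :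
    (lsemCov M).map f = lsemCov (M.map f) := by
  have h1M : (1 - M).map f = 1 - M.map f := by
    rw [← RingHom.coe_coe f, ← RingHom.mapMatrix_apply, map_sub, map_one,
      RingHom.mapMatrix_apply]
  rw [lsemCov, lsemCov, ← transpose_nonsing_inv, ← transpose_nonsing_inv, Matrix.map_mul,
    transpose_map, map_nonsing_inv_s5 f _ hM, h1M]

section RowSupport

variable {E : Matrix ι ι R} {s : ι}

theorem mul_apply_of_row_support (hE : ∀ a, a ≠ s → ∀ b, E a b = 0) (M : Matrix ι ι R)
    (a b : ι) : (M * E) a b = M a s * E s b :=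
  Finset.sum_eq_single s (fun l _ hl => by simp [hE l hl]) (by simp)

theorem transpose_mul_apply_of_row_support (hE : ∀ a, a ≠ s → ∀ b, E a b = 0)
    (M : Matrix ι ι R) (a b : ι) : (Eᵀ * M) a b = E s a * M s b :=
  Finset.sum_eq_single s (fun l _ hl => by simp [hE l hl]) (by simp)

theorem det_submatrix_conj_one_add [DecidableEq ι] {k : Type*} [Fintype k] [DecidableEq k]
    (N : Matrix ι ι R) (hE : ∀ a, a ≠ s → ∀ b, E a b = 0) (hEs : E s s = 0) (r c : k → ι)
    (hr : s ∈ Set.range r) (hc : s ∈ Set.range c) :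
    (((1 + E)ᵀ * N * (1 + E)).submatrix r c).det = (N.submatrix r c).det := by
  obtain ⟨p, hp⟩ := hr
  obtain ⟨q, hq⟩ := hc
  have hrows : (((1 + E)ᵀ * N * (1 + E)).submatrix r c).det =
      ((N * (1 + E)).submatrix r c).det := by
    refine det_eq_of_forall_row_eq_smul_add_const (fun i => E s (r i)) p (by rw [hp, hEs]) ?_
    intro a b
    simp only [submatrix_apply, Matrix.mul_assoc, Matrix.transpose_add, Matrix.transpose_one,
      Matrix.add_mul, Matrix.one_mul, add_apply, transpose_mul_apply_of_row_support hE, hp]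
  have hcols : ((N * (1 + E)).submatrix r c)ᵀ.det = (N.submatrix r c)ᵀ.det := by
    refine det_eq_of_forall_row_eq_smul_add_const (fun j => E s (c j)) q (by rw [hq, hEs]) ?_
    intro a b
    simp only [transpose_apply, submatrix_apply, Matrix.mul_add, Matrix.mul_one, add_apply,
      mul_apply_of_row_support hE, hq]
    ring
  rwa [det_transpose, det_transpose, ← hrows] at hcols

end RowSupport

end Fintype

section StrictlyUpper

variable [DecidableEq ι] [LinearOrder ι] {M : Matrix ι ι R}

theorem isUpperTriangular_one_sub (hM : ∀ a b, ¬ a < b → M a b = 0) :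
    (1 - M).IsUpperTriangular := fun a b (hab : b < a) => by
  rw [sub_apply, one_apply_ne (ne_of_gt hab), hM a b (not_lt_of_gt hab), sub_zero]

variable [Fintype ι]

theorem det_one_sub_eq_one (hM : ∀ a b, ¬ a < b → M a b = 0) : (1 - M).det = 1 := by
  rw [det_of_isUpperTriangular (isUpperTriangular_one_sub hM)]
  exact Finset.prod_eq_one fun i _ => by
    rw [sub_apply, one_apply_eq, hM i i (lt_irrefl i), sub_zero]

theorem isUnit_det_one_sub (hM : ∀ a b, ¬ a < b → M a b = 0) : IsUnit (1 - M).det := by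
  rw [det_one_sub_eq_one hM]
  exact isUnit_one

theorem inv_one_sub_apply_eq_zero (hM : ∀ a b, ¬ a < b → M a b = 0) {a b : ι} (hab : b < a) :
    (1 - M)⁻¹ a b = 0 := by
  have : Invertible (1 - M) := invertibleOfIsUnitDet _ (isUnit_det_one_sub hM)
  exact blockTriangular_inv_of_blockTriangular (isUpperTriangular_one_sub hM) hab

theorem inv_one_sub_add_single (hM : ∀ a b, ¬ a < b → M a b = 0) {s j : ι} (hsj : s < j)
    (x : R) : (1 - (M + single s j x))⁻¹ = (1 - M)⁻¹ * (1 + single s j x * (1 - M)⁻¹) := by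
  rw [← sub_sub]
  refine inv_sub_eq_of_mul_inv_mul_eq_zero _ _ (isUnit_det_one_sub hM) ?_
  rw [single_mul_mul_single, inv_one_sub_apply_eq_zero hM hsj, mul_zero, zero_mul, single_zero]

theorem lsemCov_add_single (hM : ∀ a b, ¬ a < b → M a b = 0) {s j : ι} (hsj : s < j) (x : R) :
    lsemCov (M + single s j x) =
      (1 + single s j x * (1 - M)⁻¹)ᵀ * lsemCov M * (1 + single s j x * (1 - M)⁻¹) := by
  rw [lsemCov, lsemCov, ← transpose_nonsing_inv, ← transpose_nonsing_inv,
    inv_one_sub_add_single hM hsj, transpose_mul, Matrix.mul_assoc, Matrix.mul_assoc,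
    Matrix.mul_assoc]

end StrictlyUpper

end Matrix

theorem MvPolynomial.notMem_vars_bind₁_update_zero {σ R : Type*} [CommSemiring R]
    [DecidableEq σ] (v : σ) (p : MvPolynomial σ R) :
    v ∉ (bind₁ (Function.update X v 0) p).vars := by
  rcases subsingleton_or_nontrivial R with hR | hR
  · rw [Subsingleton.elim (bind₁ _ p) 0, vars_0]
    exact Finset.notMem_empty v
  intro hv
  obtain ⟨i, -, hi⟩ := mem_vars_bind₁ _ p hv
  by_cases h : i = v
  · subst h
    simp at hi
  · rw [Function.update_of_ne h, vars_X, Finset.mem_singleton] at hi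
    exact h hi.symm

section Subdet

variable {n : ℕ} {R : Type*} [CommRing R]

theorem subdet_map {S F : Type*} [CommRing S] [FunLike F R S] [RingHomClass F R S] (f : F)
    (M : Matrix (Fin n) (Fin n) R) (I J : Finset (Fin n)) :
    subdet (M.map f) I J = f (subdet M I J) := by
  unfold subdet
  split_ifs
  · rw [← RingHom.coe_coe f, RingHom.map_det, RingHom.mapMatrix_apply, submatrix_map]
  · rw [map_zero]

theorem subdet_conj_one_add (N : Matrix (Fin n) (Fin n) R) {E : Matrix (Fin n) (Fin n) R}
    {s : Fin n} (hE : ∀ a, a ≠ s → ∀ b, E a b = 0) (hEs : E s s = 0) {I J : Finset (Fin n)}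
    (hsI : s ∈ I) (hsJ : s ∈ J) :
    subdet ((1 + E)ᵀ * N * (1 + E)) I J = subdet N I J := by
  unfold subdet
  split_ifs with h
  · exact det_submatrix_conj_one_add N hE hEs _ _
      ⟨(I.orderIsoOfFin rfl).symm ⟨s, hsI⟩, by simp⟩
      ⟨(J.orderIsoOfFin h.symm).symm ⟨s, hsJ⟩, by simp⟩
  · rfl

end Subdet

section Dag

variable {n : ℕ} {D : Finset (Fin n × Fin n)}

theorem edgeMatrix_apply_eq_zero (hD : ∀ e ∈ D, e.1 < e.2) {a b : Fin n} (hab : ¬ a < b) :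
    edgeMatrix n D a b = 0 :=
  dif_neg fun h => hab (hD _ h)

theorem edgeMatrix_eq_map_add_single {s j : Fin n} (hsj : (s, j) ∈ D) :
    edgeMatrix n D =
      (edgeMatrix n D).map (bind₁ (Function.update X (⟨(s, j), hsj⟩ : {e // e ∈ D}) 0))
        + single s j (X ⟨(s, j), hsj⟩) := by
  refine Matrix.ext fun a b => ?_
  by_cases hab : a = s ∧ b = j
  · obtain ⟨rfl, rfl⟩ := hab
    simp [edgeMatrix, hsj]
  · have hne : ∀ h : (a, b) ∈ D, (⟨(a, b), h⟩ : {e // e ∈ D}) ≠ ⟨(s, j), hsj⟩ :=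
      fun _ he => hab (Prod.ext_iff.1 (congrArg Subtype.val he))
    rw [Matrix.add_apply, Matrix.single_apply_of_ne _ _ _ _ _ fun h => hab ⟨h.1.symm, h.2.symm⟩,
      add_zero, Matrix.map_apply]
    simp only [edgeMatrix, of_apply]
    split_ifs with h
    · rw [bind₁_X_right, Function.update_of_ne (hne h)]
    · rw [map_zero]

theorem sigmaMat_eq_conj_map (hD : ∀ e ∈ D, e.1 < e.2) {s j : Fin n} (hsj : (s, j) ∈ D) :
    ∃ E : Matrix (Fin n) (Fin n) (MvPolynomial {e // e ∈ D} ℝ),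
      (∀ a, a ≠ s → ∀ b, E a b = 0) ∧ E s s = 0 ∧
      sigmaMat n D = (1 + E)ᵀ *
        (sigmaMat n D).map (bind₁ (Function.update X (⟨(s, j), hsj⟩ : {e // e ∈ D}) 0)) *
        (1 + E) := by
  set φ := bind₁ (R := ℝ) (Function.update X (⟨(s, j), hsj⟩ : {e // e ∈ D}) 0)
  have hA : ∀ a b, ¬ a < b → edgeMatrix n D a b = 0 := fun _ _ => edgeMatrix_apply_eq_zero hD
  have hA₀ : ∀ a b, ¬ a < b → (edgeMatrix n D).map φ a b = 0 := fun a b hab => by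
    rw [Matrix.map_apply, hA a b hab, map_zero]
  have hsltj : s < j := hD _ hsj
  refine ⟨single s j (X ⟨(s, j), hsj⟩) * (1 - (edgeMatrix n D).map φ)⁻¹,
    fun a ha b => single_mul_apply_of_ne _ _ _ _ _ ha _, ?_, ?_⟩
  · rw [single_mul_apply_same, inv_one_sub_apply_eq_zero hA₀ hsltj, mul_zero]
  · change lsemCov (edgeMatrix n D) = _ * (lsemCov (edgeMatrix n D)).map φ * _
    rw [map_lsemCov φ (isUnit_det_one_sub hA), ← lsemCov_add_single hA₀ hsltj]
    exact congrArg lsemCov (edgeMatrix_eq_map_add_single hsj)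

theorem notMem_vars_subdet_sigmaMat (hD : ∀ e ∈ D, e.1 < e.2) {s j : Fin n} (hsj : (s, j) ∈ D)
    {I J : Finset (Fin n)} (hsI : s ∈ I) (hsJ : s ∈ J) :
    (⟨(s, j), hsj⟩ : {e // e ∈ D}) ∉ (subdet (sigmaMat n D) I J).vars := by
  obtain ⟨E, hE, hEs, hsig⟩ := sigmaMat_eq_conj_map hD hsj
  have hfix : subdet (sigmaMat n D) I J =
      bind₁ (Function.update X (⟨(s, j), hsj⟩ : {e // e ∈ D}) 0) (subdet (sigmaMat n D) I J) := by
    conv_lhs => rw [hsig]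
    rw [subdet_conj_one_add _ hE hEs hsI hsJ]
    exact subdet_map (bind₁ _) _ I J
  rw [hfix]
  exact notMem_vars_bind₁_update_zero _ _

end Dag

theorem statement5_general (n : ℕ) (D : Finset (Fin n × Fin n)) (hD : ∀ e ∈ D, e.1 < e.2)
    (i0 j0 : Fin n) (S : Finset (Fin n))
    (s j : Fin n) (hs : s ∈ S) (hsj : (s, j) ∈ D) :
    (⟨(s, j), hsj⟩ : {e // e ∈ D}) ∉ (fpoly n D i0 j0 S).vars :=
  notMem_vars_subdet_sigmaMat hD hsj (Finset.mem_insert_of_mem hs) (Finset.mem_insert_of_mem hs)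

/-- If `s ∈ S` and `s → j`, then the variable `X_{(s,j)}` does not occur in `f`. -/
theorem statement5 (n : ℕ) (D : Finset (Fin n × Fin n)) (hD : ∀ e ∈ D, e.1 < e.2)
    (i0 j0 : Fin n) (hne : i0 ≠ j0) (S : Finset (Fin n)) (hi0S : i0 ∉ S) (hj0S : j0 ∉ S)
    (s j : Fin n) (hs : s ∈ S) (hsj : (s, j) ∈ D) :
    (⟨(s, j), hsj⟩ : {e // e ∈ D}) ∉ (fpoly n D i0 j0 S).vars :=
  statement5_general n D hD i0 j0 S s j hs hsj
end

section
/- Suppose D contains no edge whose source lies in S and that (i0,j0) ∈ D. Then the variable X_{(i0,j0)} appears at most linearly in f, i.e., the degree of f in the variable X_{(i0,j0)} is at most 1. -/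
open MvPolynomial Matrix

/-!
Write `1 - A = B₀ - x • E` with `x = X (i0, j0)`, `E` the matrix unit at `(i0, j0)` and `B₀` free
of `x`, i.e. with entries in the subalgebra `supported ℝ {(i0, j0)}ᶜ`. The inverse `P = B₀⁻¹` is
upper triangular, so `P j0 i0 = 0`; the Sherman–Morrison denominator is then `1` and
`(1 - A)⁻¹ = P * U` with `U = 1 + x • e_{i0} wᵀ`, `w` the row `j0` of `P`. Hence
`Σ = Uᵀ * (Pᵀ * P) * U`. Left multiplication by `Uᵀ` adds multiples of row `i0` to the other rows
and leaves row `i0` alone (`w i0 = 0`); as `i0` is one of the rows of the minor, it does not change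
the minor. What is left is the minor of `(Pᵀ * P) * U`, a rank-one perturbation
`M + x • u vᵀ` of an `x`-free matrix, whose determinant is affine in `x`.
-/

namespace Matrix

variable {m n o α : Type*} [Fintype n] [DecidableEq n] [CommRing α]

theorem det_mem_of_forall_mem {S : Type*} [SetLike S α] [SubringClass S α] {s : S}
    {M : Matrix n n α} (h : ∀ i j, M i j ∈ s) : M.det ∈ s := by
  rw [det_apply]
  exact sum_mem fun σ _ => by
    rw [Units.smul_def]
    exact zsmul_mem (prod_mem fun i _ => h _ _) _

theorem inv_apply_mem_of_det_eq_one {S : Type*} [SetLike S α] [SubringClass S α] {s : S}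
    {M : Matrix n n α} (hdet : M.det = 1) (h : ∀ i j, M i j ∈ s) (i j : n) : M⁻¹ i j ∈ s := by
  rw [inv_def, hdet, Ring.inverse_one, one_smul, adjugate_apply]
  refine det_mem_of_forall_mem fun a b => ?_
  rw [updateRow_apply, Pi.single_apply]
  split_ifs
  exacts [one_mem s, zero_mem s, h _ _]

theorem det_one_add_vecMulVec (u v : n → α) : det (1 + vecMulVec u v) = 1 + v ⬝ᵥ u := by
  rw [vecMulVec_eq Unit, det_one_add_replicateCol_mul_replicateRow]

theorem det_submatrix_one_add_vecMulVec_single_mul [Fintype m] [DecidableEq m]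
    (M : Matrix n o α) (r : m → n) (c : m → o) (p : m) (u : n → α) (hu : u (r p) = 0) :
    det (((1 + vecMulVec u (Pi.single (r p) 1)) * M).submatrix r c) = det (M.submatrix r c) := by
  have h : ((1 + vecMulVec u (Pi.single (r p) 1)) * M).submatrix r c
      = (1 + vecMulVec (u ∘ r) (Pi.single p 1)) * M.submatrix r c := by
    ext a b
    simp [Matrix.add_mul, vecMulVec_mul, vecMulVec_apply]
  rw [h, det_mul, det_one_add_vecMulVec, single_one_dotProduct, Function.comp_apply, hu,
    add_zero, one_mul]

/-- Bordering moves the rank-one term into the last row, where the determinant is linear. -/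
theorem det_add_smul_vecMulVec (M : Matrix n n α) (t : α) (u v : n → α) :
    det (M + t • vecMulVec u v) =
      det M + t * det (fromBlocks M (-replicateCol Unit u) (replicateRow Unit v) 0) := by
  set N := fromBlocks M (-replicateCol Unit u) (replicateRow Unit v) 0
  have hN : fromBlocks M (-replicateCol Unit u) (t • replicateRow Unit v) 1
      = N.updateRow (Sum.inr ()) (t • N (Sum.inr ()) + Pi.single (Sum.inr ()) 1) := by
    ext (i | i) (j | j) <;> simp [N, updateRow_apply]
  have hM : N.updateRow (Sum.inr ()) (Pi.single (Sum.inr ()) 1)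
      = fromBlocks M (-replicateCol Unit u) 0 1 := by
    ext (i | i) (j | j) <;> simp [N, updateRow_apply]
  calc det (M + t • vecMulVec u v)
      = det (fromBlocks M (-replicateCol Unit u) (t • replicateRow Unit v) 1) := by
        rw [det_fromBlocks_one₂₂, Matrix.neg_mul, sub_neg_eq_add, Matrix.mul_smul,
          ← vecMulVec_eq]
    _ = det M + t * det N := by
        rw [hN, det_updateRow_add, det_updateRow_smul, updateRow_eq_self, hM,
          det_fromBlocks_zero₂₁, det_one, mul_one, add_comm]

theorem inv_sub_smul_vecMulVec {B : Matrix n n α} (hB : IsUnit B.det) (t : α) (u v : n → α)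
    (huv : v ᵥ* B⁻¹ ⬝ᵥ u = 0) :
    (B - t • vecMulVec u v)⁻¹ = B⁻¹ * (1 + t • vecMulVec u (v ᵥ* B⁻¹)) := by
  refine inv_eq_right_inv ?_
  have hsq : vecMulVec u (v ᵥ* B⁻¹) * vecMulVec u (v ᵥ* B⁻¹) = 0 := by
    rw [vecMulVec_mul_vecMulVec, huv, zero_smul, vecMulVec_zero]
  rw [← Matrix.mul_assoc, Matrix.sub_mul, mul_nonsing_inv _ hB, Matrix.smul_mul, vecMulVec_mul,
    Matrix.sub_mul]
  simp [Matrix.mul_add, hsq]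

theorem det_submatrix_transpose_mul_mul [Fintype m] [DecidableEq m] (M : Matrix n n α)
    (r c : m → n) (p : m) (t : α) (w : n → α) (hw : w (r p) = 0) :
    det (((1 + t • vecMulVec (Pi.single (r p) 1) w)ᵀ * M *
        (1 + t • vecMulVec (Pi.single (r p) 1) w)).submatrix r c) =
      det (M.submatrix r c) + t * det (fromBlocks (M.submatrix r c)
        (-replicateCol Unit fun a => M (r a) (r p)) (replicateRow Unit (w ∘ c)) 0) := by
  have hU : (1 + t • vecMulVec (Pi.single (r p) 1) w)ᵀ =
      1 + vecMulVec (t • w) (Pi.single (r p) 1) := by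
    rw [transpose_add, transpose_one, transpose_smul, transpose_vecMulVec, smul_vecMulVec]
  have hMU : (M * (1 + t • vecMulVec (Pi.single (r p) 1) w)).submatrix r c
      = M.submatrix r c + t • vecMulVec (fun a => M (r a) (r p)) (w ∘ c) := by
    ext a b
    simp [Matrix.mul_add, mul_vecMulVec, vecMulVec_apply]
  rw [hU, Matrix.mul_assoc, det_submatrix_one_add_vecMulVec_single_mul _ _ _ _ _ (by simp [hw]),
    hMU, det_add_smul_vecMulVec]

end Matrix

namespace MvPolynomial

variable {σ R : Type*} [CommSemiring R]

theorem degreeOf_eq_zero_of_mem_supported_compl {i : σ} {p : MvPolynomial σ R}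
    (hp : p ∈ supported R {i}ᶜ) : degreeOf i p = 0 := by
  by_contra h
  exact mem_supported.mp hp (mem_vars_iff_degreeOf_ne_zero.mpr h) rfl

theorem degreeOf_add_X_mul_le_one {i : σ} {a b : MvPolynomial σ R}
    (ha : a ∈ supported R {i}ᶜ) (hb : b ∈ supported R {i}ᶜ) : degreeOf i (a + X i * b) ≤ 1 := by
  refine (degreeOf_add_le _ _ _).trans (max_le ?_ ?_)
  · rw [degreeOf_eq_zero_of_mem_supported_compl ha]
    exact zero_le_one
  · rw [mul_comm]
    refine (degreeOf_mul_X_self _ _).trans ?_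
    rw [degreeOf_eq_zero_of_mem_supported_compl hb]

end MvPolynomial

section

variable {α : Type*} [CommRing α]

theorem exists_subdet_transpose_mul_mul_eq {S : Type*} [SetLike S α] [SubringClass S α] {s : S}
    {n : ℕ} {M : Matrix (Fin n) (Fin n) α} (hM : ∀ i j, M i j ∈ s) {w : Fin n → α}
    (hw : ∀ i, w i ∈ s) {k : Fin n} (hwk : w k = 0) {I : Finset (Fin n)} (hk : k ∈ I)
    (J : Finset (Fin n)) (t : α) :
    ∃ a ∈ s, ∃ b ∈ s, subdet ((1 + t • vecMulVec (Pi.single k 1) w)ᵀ * M *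
      (1 + t • vecMulVec (Pi.single k 1) w)) I J = a + t * b := by
  unfold subdet
  split_ifs with hIJ
  · set r : Fin I.card → Fin n := fun p => I.orderIsoOfFin rfl p
    obtain ⟨p, rfl⟩ : ∃ p, r p = k :=
      ⟨(I.orderIsoOfFin rfl).symm ⟨k, hk⟩, by simp only [r, OrderIso.apply_symm_apply]⟩
    rw [det_submatrix_transpose_mul_mul _ _ _ _ _ _ hwk]
    refine ⟨_, det_mem_of_forall_mem fun i j => hM _ _, _, det_mem_of_forall_mem ?_, rfl⟩
    rintro (i | i) (j | j) <;> simp [hM, hw]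
  · exact ⟨0, zero_mem s, 0, zero_mem s, by simp⟩

end

section

open Finset

variable {n : ℕ} {D : Finset (Fin n × Fin n)}

noncomputable def edgeMatrixErase (D : Finset (Fin n × Fin n)) (e : {e // e ∈ D}) :
    Matrix (Fin n) (Fin n) (MvPolynomial {e // e ∈ D} ℝ) :=
  edgeMatrix n D - single e.1.1 e.1.2 (X e)

theorem one_sub_edgeMatrix_eq (e : {e // e ∈ D}) :
    1 - edgeMatrix n D =
      (1 - edgeMatrixErase D e) - (X e : MvPolynomial {e // e ∈ D} ℝ) •
        vecMulVec (Pi.single e.1.1 1) (Pi.single e.1.2 1) := by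
  rw [edgeMatrixErase, ← single_eq_single_vecMulVec_single, smul_single, smul_eq_mul, mul_one]
  abel

theorem one_sub_edgeMatrixErase_apply_mem_supported (e : {e // e ∈ D}) (a b : Fin n) :
    (1 - edgeMatrixErase D e) a b ∈ supported ℝ ({e}ᶜ : Set {e // e ∈ D}) := by
  have hone : (1 : Matrix (Fin n) (Fin n) (MvPolynomial {e // e ∈ D} ℝ)) a b ∈
      supported ℝ ({e}ᶜ : Set {e // e ∈ D}) := by
    rw [one_apply]
    split_ifs
    exacts [one_mem _, zero_mem _]
  rw [Matrix.sub_apply, edgeMatrixErase, Matrix.sub_apply, single_apply]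
  by_cases hab : (a, b) = e.1
  · obtain ⟨⟨a, b⟩, he⟩ := e
    cases hab
    simpa [edgeMatrix, he] using hone
  · have hne : ¬(e.1.1 = a ∧ e.1.2 = b) := fun h => hab (by rw [← h.1, ← h.2])
    rw [if_neg hne, sub_zero]
    refine sub_mem hone ?_
    rw [edgeMatrix, of_apply]
    split_ifs
    · exact X_mem_supported.mpr fun h => hab (congrArg Subtype.val h)
    · exact zero_mem _

theorem edgeMatrixErase_apply_eq_zero (hD : ∀ e ∈ D, e.1 < e.2) (e : {e // e ∈ D}) {a b : Fin n}
    (hab : ¬ a < b) : edgeMatrixErase D e a b = 0 := by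
  have hsingle : ¬(e.1.1 = a ∧ e.1.2 = b) := fun h => hab (h.1 ▸ h.2 ▸ hD _ e.2)
  rw [edgeMatrixErase, Matrix.sub_apply, single_apply, if_neg hsingle, sub_zero, edgeMatrix,
    of_apply, dif_neg fun h => hab (hD _ h)]

theorem isUpperTriangular_one_sub_edgeMatrixErase (hD : ∀ e ∈ D, e.1 < e.2)
    (e : {e // e ∈ D}) : (1 - edgeMatrixErase D e).IsUpperTriangular :=
  fun a b (hba : b < a) => by
    rw [Matrix.sub_apply, one_apply_ne hba.ne', edgeMatrixErase_apply_eq_zero hD e hba.not_gt,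
      sub_zero]

theorem det_one_sub_edgeMatrixErase (hD : ∀ e ∈ D, e.1 < e.2) (e : {e // e ∈ D}) :
    det (1 - edgeMatrixErase D e) = 1 := by
  rw [det_of_isUpperTriangular (isUpperTriangular_one_sub_edgeMatrixErase hD e)]
  refine prod_eq_one fun a _ => ?_
  rw [Matrix.sub_apply, one_apply_eq, edgeMatrixErase_apply_eq_zero hD e (lt_irrefl a), sub_zero]

theorem inv_one_sub_edgeMatrixErase_apply_eq_zero (hD : ∀ e ∈ D, e.1 < e.2) (e : {e // e ∈ D})
    {a b : Fin n} (hab : a < b) : (1 - edgeMatrixErase D e)⁻¹ b a = 0 := by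
  have := invertibleOfIsUnitDet _ ((det_one_sub_edgeMatrixErase hD e).symm ▸ isUnit_one)
  exact blockTriangular_inv_of_blockTriangular (isUpperTriangular_one_sub_edgeMatrixErase hD e) hab

end

theorem statement7_general (n : ℕ) (D : Finset (Fin n × Fin n)) (hD : ∀ e ∈ D, e.1 < e.2)
    (i0 j0 : Fin n) (S : Finset (Fin n)) (hedge : (i0, j0) ∈ D) :
    MvPolynomial.degreeOf (⟨(i0, j0), hedge⟩ : {e // e ∈ D}) (fpoly n D i0 j0 S) ≤ 1 := by
  set e : {e // e ∈ D} := ⟨(i0, j0), hedge⟩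
  set x : MvPolynomial {e // e ∈ D} ℝ := X e
  set B := 1 - edgeMatrixErase D e
  have hdet : B.det = 1 := det_one_sub_edgeMatrixErase hD e
  have hBinv : ∀ i j, B⁻¹ i j ∈ supported ℝ ({e}ᶜ : Set {e // e ∈ D}) :=
    inv_apply_mem_of_det_eq_one hdet (one_sub_edgeMatrixErase_apply_mem_supported e)
  have hw : B⁻¹ j0 i0 = 0 := inv_one_sub_edgeMatrixErase_apply_eq_zero hD e (hD _ hedge)
  have hsigma : sigmaMat n D = (1 + x • vecMulVec (Pi.single i0 1) (B⁻¹ j0))ᵀ *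
      (B⁻¹ᵀ * B⁻¹) * (1 + x • vecMulVec (Pi.single i0 1) (B⁻¹ j0)) := by
    rw [sigmaMat, ← transpose_nonsing_inv, one_sub_edgeMatrix_eq e,
      inv_sub_smul_vecMulVec (by rw [hdet]; exact isUnit_one) _ _ _ (by simpa using hw),
      single_one_vecMul, transpose_mul]
    simp only [Matrix.mul_assoc]
    rfl
  obtain ⟨a, ha, b, hb, hf⟩ := exists_subdet_transpose_mul_mul_eq (M := B⁻¹ᵀ * B⁻¹)
    (fun i j => by rw [mul_apply]; exact sum_mem fun k _ => mul_mem (hBinv k i) (hBinv k j))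
    (hBinv j0) hw (Finset.mem_insert_self i0 S) (insert j0 S) x
  rw [fpoly, hsigma, hf]
  exact degreeOf_add_X_mul_le_one ha hb

/-- If no edge of `D` starts in `S` and `i0 → j0`, then `X_{(i0,j0)}` appears at most
linearly in `f`. -/
theorem statement7 (n : ℕ) (D : Finset (Fin n × Fin n)) (hD : ∀ e ∈ D, e.1 < e.2)
    (i0 j0 : Fin n) (hne : i0 ≠ j0) (S : Finset (Fin n)) (hi0S : i0 ∉ S) (hj0S : j0 ∉ S)
    (hout : ∀ e ∈ D, e.1 ∉ S) (hedge : (i0, j0) ∈ D) :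
    MvPolynomial.degreeOf (⟨(i0, j0), hedge⟩ : {e // e ∈ D}) (fpoly n D i0 j0 S) ≤ 1 :=
  statement7_general n D hD i0 j0 S hedge
end

section
/- For all vertices i, j ∈ Fin n, the (i,j) entry of Σ_Ω equals the sum of the weights w(t) over all treks t from i to j: (Σ_Ω)_{ij} = Σ_{t trek from i to j} w(t). -/
/-!
The inverse `P = (1 - A)⁻¹` is the path matrix: `P m i` is the sum of the weights of the paths
from `m` to `i`, because splitting off the first edge of a path gives `P = 1 + A * P`. Hence
`(Σ_Ω) i j = ∑ m, P m i * ω m * P m j`, and a trek from `i` to `j` with top `m` is exactly a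
pair of paths from `m` to `i` and from `m` to `j`, with weight the product of the two path
weights and `ω m`.
-/

open MvPolynomial Matrix

noncomputable section

/-- The polynomial ring in the edge variables `X_e`, `e ∈ D`, and the vertex
variables `ω_m`, `m ∈ Fin n`. -/
abbrev RingOm (n : ℕ) (D : Finset (Fin n × Fin n)) : Type :=
  MvPolynomial ({e // e ∈ D} ⊕ Fin n) ℝ

/-- The matrix of edge variables. -/
def edgeMatrixOm (n : ℕ) (D : Finset (Fin n × Fin n)) :
    Matrix (Fin n) (Fin n) (RingOm n D) :=
  Matrix.of fun i j => if h : (i, j) ∈ D then X (Sum.inl ⟨(i, j), h⟩) else 0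

/-- `Σ_Ω = (I - A)⁻ᵀ · Ω · (I - A)⁻¹` with `Ω = diag(ω_0, …, ω_{n-1})`. -/
def sigmaOmMat (n : ℕ) (D : Finset (Fin n × Fin n)) :
    Matrix (Fin n) (Fin n) (RingOm n D) :=
  ((1 - edgeMatrixOm n D)ᵀ)⁻¹ * Matrix.diagonal (fun m => X (Sum.inr m)) *
    (1 - edgeMatrixOm n D)⁻¹

/-- The edge variable attached to a pair of vertices. -/
def edgeVarOm (n : ℕ) (D : Finset (Fin n × Fin n)) (p : Fin n × Fin n) : RingOm n D :=
  if h : p ∈ D then X (Sum.inl ⟨p, h⟩) else 0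

/-- The product of the edge variables along the consecutive pairs of a list of vertices. -/
def pathProdOm (n : ℕ) (D : Finset (Fin n × Fin n)) (l : List (Fin n)) : RingOm n D :=
  ((l.zip l.tail).map (edgeVarOm n D)).prod

/-- A trek: a pair of paths (the up part and the down part) starting at the same vertex,
the top. Each path is recorded as the list of its vertices, from the top downwards. -/
structure Trek (n : ℕ) (D : Finset (Fin n × Fin n)) where
  up : List (Fin n)
  down : List (Fin n)
  up_ne : up ≠ []
  down_ne : down ≠ []
  up_chain : up.Chain' fun i j => (i, j) ∈ D
  down_chain : down.Chain' fun i j => (i, j) ∈ D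
  top_eq : up.head up_ne = down.head down_ne

namespace Trek

variable {n : ℕ} {D : Finset (Fin n × Fin n)}

/-- The top of a trek. -/
def top (t : Trek n D) : Fin n := t.up.head t.up_ne

/-- The starting vertex of a trek (the lower end of its up part). -/
def start (t : Trek n D) : Fin n := t.up.getLast t.up_ne

/-- The end vertex of a trek (the lower end of its down part). -/
def endv (t : Trek n D) : Fin n := t.down.getLast t.down_ne

/-- The weight `w(t) = (∏_{e ∈ P_U} X_e) · ω_top · (∏_{e ∈ P_D} X_e)`. -/
def wt (t : Trek n D) : RingOm n D :=
  pathProdOm n D t.up * X (Sum.inr t.top) * pathProdOm n D t.down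

/-- A sided intersection between two treks: a vertex on both up parts or on both
down parts. -/
def SidedMeet (t t' : Trek n D) : Prop :=
  ∃ v : Fin n, (v ∈ t.up ∧ v ∈ t'.up) ∨ (v ∈ t.down ∧ v ∈ t'.down)

end Trek

/-- A trek system from `I` to `J`: a family of treks starting at the elements of `I`
whose end vertices enumerate `J` bijectively. -/
structure TrekSystem (n : ℕ) (D : Finset (Fin n × Fin n)) (I J : Finset (Fin n)) where
  trek : {i // i ∈ I} → Trek n D
  bij : {i // i ∈ I} ≃ {j // j ∈ J}
  start_eq : ∀ i, (trek i).start = i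
  end_eq : ∀ i, (trek i).endv = bij i

namespace TrekSystem

variable {n : ℕ} {D : Finset (Fin n × Fin n)} {I J : Finset (Fin n)}

/-- The number of crossings of (the bijection induced by) a trek system. -/
def crossings (T : TrekSystem n D I J) : ℕ :=
  (Finset.univ.filter fun p : {i // i ∈ I} × {i // i ∈ I} =>
    (p.1 : Fin n) < (p.2 : Fin n) ∧ ((T.bij p.2 : Fin n) < (T.bij p.1 : Fin n))).card

/-- The weight `w(T)` of a trek system: the product of the weights of its treks. -/
def wt (T : TrekSystem n D I J) : RingOm n D :=
  ∏ i : {i // i ∈ I}, (T.trek i).wt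

/-- `sgn(T)·w(T)` of a trek system. -/
def sgnwt (T : TrekSystem n D I J) : RingOm n D :=
  (-1 : RingOm n D) ^ T.crossings * T.wt

/-- A trek system has no sided intersections if no two distinct treks in it have one. -/
def NoSided (T : TrekSystem n D I J) : Prop :=
  ∀ i i', i ≠ i' → ¬ (T.trek i).SidedMeet (T.trek i')

end TrekSystem

section Paths

variable {n : ℕ} (D : Finset (Fin n × Fin n))

def IsPath (m i : Fin n) (l : List (Fin n)) : Prop :=
  l.IsChain (fun a b => (a, b) ∈ D) ∧ l.head? = some m ∧ l.getLast? = some i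

open Classical in
/-- Under `hD` every path increases strictly, hence is a sublist of `List.finRange n`. -/
def paths (m i : Fin n) : Finset (List (Fin n)) :=
  (List.finRange n).sublists.toFinset.filter (IsPath D m i)

def pathSum (m i : Fin n) : RingOm n D :=
  ∑ l ∈ paths D m i, pathProdOm n D l

def pathSumMatrix : Matrix (Fin n) (Fin n) (RingOm n D) :=
  Matrix.of (pathSum D)

variable {D}

namespace IsPath

variable {m i : Fin n} {l : List (Fin n)}

theorem ne_nil (h : IsPath D m i l) : l ≠ [] := by
  rintro rfl
  simp [IsPath] at h

theorem head_eq (h : IsPath D m i l) : l.head h.ne_nil = m := by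
  simpa [List.head?_eq_some_head h.ne_nil] using h.2.1

theorem getLast_eq (h : IsPath D m i l) : l.getLast h.ne_nil = i := by
  simpa [List.getLast?_eq_some_getLast h.ne_nil] using h.2.2

theorem pairwise_lt (hD : ∀ e ∈ D, e.1 < e.2) (h : IsPath D m i l) : l.Pairwise (· < ·) :=
  List.isChain_iff_pairwise.mp (h.1.imp fun {a b} hab => hD (a, b) hab)

end IsPath

theorem not_isPath_nil {m i : Fin n} : ¬ IsPath D m i [] := by
  simp [IsPath]

theorem isPath_singleton {m i a : Fin n} : IsPath D m i [a] ↔ a = m ∧ a = i := by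
  simp [IsPath]

theorem isPath_cons_cons {m i a b : Fin n} {l : List (Fin n)} :
    IsPath D m i (a :: b :: l) ↔ a = m ∧ (m, b) ∈ D ∧ IsPath D b i (b :: l) := by
  simp only [IsPath, List.isChain_cons_cons, List.head?_cons, Option.some.injEq,
    List.getLast?_cons_cons, true_and]
  grind

open Classical in
theorem mem_paths (hD : ∀ e ∈ D, e.1 < e.2) {m i : Fin n} {l : List (Fin n)} :
    l ∈ paths D m i ↔ IsPath D m i l := by
  refine ⟨fun h => (Finset.mem_filter.mp h).2, fun h => Finset.mem_filter.mpr ⟨?_, h⟩⟩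
  have hl := h.pairwise_lt hD
  rw [List.mem_toFinset, List.mem_sublists]
  exact List.sublist_of_subperm_of_pairwise
    (List.subperm_of_subset hl.nodup fun a _ => List.mem_finRange a) hl
    (List.pairwise_lt_finRange n)

theorem pathProdOm_cons_cons (a b : Fin n) (l : List (Fin n)) :
    pathProdOm n D (a :: b :: l) = edgeVarOm n D (a, b) * pathProdOm n D (b :: l) := by
  simp [pathProdOm, List.zip]

end Paths


section PathSum

variable {n : ℕ} {D : Finset (Fin n × Fin n)} (hD : ∀ e ∈ D, e.1 < e.2)
include hD

theorem paths_filter_length_eq_one (m i : Fin n) :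
    (paths D m i).filter (fun l => l.length = 1) = if m = i then {[m]} else ∅ := by
  ext l
  rcases l with _ | ⟨a, _ | ⟨b, l⟩⟩ <;>
    split_ifs <;> simp [mem_paths hD, isPath_singleton] <;> grind

/-- Splitting off the first edge `m → k` of a path from `m` of positive length. -/
theorem sum_paths_filter_length_ne_one (m i : Fin n) :
    ∑ l ∈ (paths D m i).filter (fun l => ¬ l.length = 1), pathProdOm n D l =
      ∑ k, edgeVarOm n D (m, k) * pathSum D k i := by
  simp only [pathSum, Finset.mul_sum]
  rw [← Finset.sum_filter_of_ne (p := fun k => (m, k) ∈ D)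
    (fun k _ h => by_contra fun hk => h (by simp [edgeVarOm, hk])), Finset.sum_sigma']
  refine Finset.sum_nbij' (fun l => ⟨l.tail.headD m, l.tail⟩) (fun x => m :: x.2)
    ?_ ?_ ?_ ?_ ?_
  · rintro (_ | ⟨a, _ | ⟨b, l⟩⟩) hl <;>
      simp [mem_paths hD, isPath_cons_cons, not_isPath_nil] at hl ⊢
    exact hl.2
  · rintro ⟨k, _ | ⟨b, l⟩⟩ hx <;>
      simp [mem_paths hD, isPath_cons_cons, not_isPath_nil] at hx ⊢
    obtain rfl : b = k := hx.2.head_eq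
    exact hx
  · rintro (_ | ⟨a, _ | ⟨b, l⟩⟩) hl <;>
      simp [mem_paths hD, isPath_cons_cons, not_isPath_nil] at hl ⊢
    exact hl.1.symm
  · rintro ⟨k, _ | ⟨b, l⟩⟩ hx <;> simp [mem_paths hD, not_isPath_nil] at hx ⊢
    exact hx.2.head_eq
  · rintro (_ | ⟨a, _ | ⟨b, l⟩⟩) hl <;>
      simp [mem_paths hD, isPath_cons_cons, not_isPath_nil] at hl ⊢
    rw [hl.1, pathProdOm_cons_cons]

theorem pathSum_eq_ite_add_sum (m i : Fin n) :
    pathSum D m i = (if m = i then 1 else 0) + ∑ k, edgeVarOm n D (m, k) * pathSum D k i := by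
  rw [pathSum, ← Finset.sum_filter_add_sum_filter_not _ (fun l => l.length = 1),
    paths_filter_length_eq_one hD, sum_paths_filter_length_ne_one hD]
  split_ifs <;> simp [pathProdOm]

theorem one_sub_edgeMatrixOm_mul_pathSumMatrix :
    (1 - edgeMatrixOm n D) * pathSumMatrix D = 1 := by
  refine Matrix.ext fun m i => ?_
  rw [sub_mul, one_mul, Matrix.sub_apply, Matrix.mul_apply, Matrix.one_apply]
  simp only [pathSumMatrix, Matrix.of_apply]
  rw [pathSum_eq_ite_add_sum hD m i]
  exact add_sub_cancel_right _ _

theorem sigmaOmMat_apply (i j : Fin n) :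
    sigmaOmMat n D i j = ∑ m, pathSum D m i * X (Sum.inr m) * pathSum D m j := by
  rw [sigmaOmMat, ← Matrix.transpose_nonsing_inv,
    Matrix.inv_eq_right_inv (one_sub_edgeMatrixOm_mul_pathSumMatrix hD), Matrix.mul_apply]
  simp [pathSumMatrix, Matrix.mul_diagonal]

end PathSum


namespace Trek

variable {n : ℕ} {D : Finset (Fin n × Fin n)}

theorem isPath_up (t : Trek n D) : IsPath D t.top t.start t.up :=
  ⟨t.up_chain, List.head?_eq_some_head t.up_ne, List.getLast?_eq_some_getLast t.up_ne⟩

theorem isPath_down (t : Trek n D) : IsPath D t.top t.endv t.down :=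
  ⟨t.down_chain, (List.head?_eq_some_head t.down_ne).trans (congrArg some t.top_eq.symm),
    List.getLast?_eq_some_getLast t.down_ne⟩

def ofPaths {m a b : Fin n} {p q : List (Fin n)} (hp : IsPath D m a p) (hq : IsPath D m b q) :
    Trek n D where
  up := p
  down := q
  up_ne := hp.ne_nil
  down_ne := hq.ne_nil
  up_chain := hp.1
  down_chain := hq.1
  top_eq := hp.head_eq.trans hq.head_eq.symm

section ofPaths

variable {m a b : Fin n} {p q : List (Fin n)} (hp : IsPath D m a p) (hq : IsPath D m b q)

theorem top_ofPaths : (ofPaths hp hq).top = m := hp.head_eq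

theorem start_ofPaths : (ofPaths hp hq).start = a := hp.getLast_eq

theorem endv_ofPaths : (ofPaths hp hq).endv = b := hq.getLast_eq

theorem wt_ofPaths :
    (ofPaths hp hq).wt = pathProdOm n D p * X (Sum.inr m) * pathProdOm n D q := by
  rw [wt, top_ofPaths]
  rfl

end ofPaths

variable (hD : ∀ e ∈ D, e.1 < e.2)
include hD

def equivSigmaPaths (i j : Fin n) :
    {t : Trek n D // t.start = i ∧ t.endv = j} ≃ Σ m, paths D m i × paths D m j where
  toFun := fun ⟨t, hi, hj⟩ => ⟨t.top, ⟨t.up, (mem_paths hD).2 (hi ▸ t.isPath_up)⟩,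
    ⟨t.down, (mem_paths hD).2 (hj ▸ t.isPath_down)⟩⟩
  invFun x := ⟨ofPaths ((mem_paths hD).1 x.2.1.2) ((mem_paths hD).1 x.2.2.2),
    start_ofPaths _ _, endv_ofPaths _ _⟩
  left_inv := fun ⟨_, _, _⟩ => rfl
  right_inv := by
    rintro ⟨m, ⟨_ | ⟨a, p⟩, hp⟩, ⟨q, hq⟩⟩
    · exact absurd ((mem_paths hD).1 hp) not_isPath_nil
    · obtain rfl : a = m := ((mem_paths hD).1 hp).head_eq
      rfl

theorem finsum_wt (i j : Fin n) :
    ∑ᶠ t : {t : Trek n D // t.start = i ∧ t.endv = j}, t.val.wt =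
      ∑ m, pathSum D m i * X (Sum.inr m) * pathSum D m j := by
  rw [← finsum_comp_equiv (equivSigmaPaths hD i j).symm, finsum_eq_sum_of_fintype,
    Fintype.sum_sigma]
  refine Fintype.sum_congr _ _ fun m => ?_
  rw [pathSum, pathSum, ← Finset.sum_coe_sort (paths D m i),
    ← Finset.sum_coe_sort (paths D m j), Finset.sum_mul, Finset.sum_mul_sum,
    ← Fintype.sum_prod_type']
  exact Fintype.sum_congr _ _ fun pq =>
    wt_ofPaths ((mem_paths hD).1 pq.1.2) ((mem_paths hD).1 pq.2.2)

end Trek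

/-- The trek rule: `(Σ_Ω)_{ij}` is the sum of the weights of all treks from `i` to `j`. -/
theorem statement13 (n : ℕ) (D : Finset (Fin n × Fin n)) (hD : ∀ e ∈ D, e.1 < e.2)
    (i j : Fin n) :
    sigmaOmMat n D i j =
      ∑ᶠ t : {t : Trek n D // t.start = i ∧ t.endv = j}, t.val.wt := by
  rw [sigmaOmMat_apply hD, Trek.finsum_wt hD]

end
end

section
/- Let n = 5 and D = {(1,3),(1,4),(2,3),(2,4),(3,5),(4,5)} (vertices labeled 1,…,5). Let a ∈ ℝ^D be given by a_{13} = −3, a_{14} = −2, a_{23} = 8, a_{24} = 10, a_{35} = 2, a_{45} = 0. Then pcor²(1,2 | {5})(a) = 1024/1189 and pcor²(1,2 | {3,4})(a) = 88/105; in particular pcor²(1,2 | {5})(a) > pcor²(1,2 | {3,4})(a). -/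
/-!
Since the longest directed path of the graph has two edges, `A³ = 0` and
`(I - A)⁻¹ = I + A + A²`, so `Σ(a)` is an explicit integer matrix. The two partial correlations are
then ratios of its `2 × 2` and `3 × 3` minors: `96² / (261 · 41) = 1024 / 1189` and
`44² / (165 · 14) = 88 / 105`.
-/

open Matrix

noncomputable section

/-- `Σ(a) = (I - A(a))⁻ᵀ (I - A(a))⁻¹`. -/
def sigmaR (n : ℕ) (D : Finset (Fin n × Fin n)) (a : {e // e ∈ D} → ℝ) :
    Matrix (Fin n) (Fin n) ℝ :=
  ((1 - edgeMatrixR n D a)ᵀ)⁻¹ * (1 - edgeMatrixR n D a)⁻¹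

/-- The squared partial correlation `pcor²(i0, j0 | S)(a)`. -/
def pcor2 (n : ℕ) (D : Finset (Fin n × Fin n)) (a : {e // e ∈ D} → ℝ)
    (i0 j0 : Fin n) (S : Finset (Fin n)) : ℝ :=
  (subdet (sigmaR n D a) (insert i0 S) (insert j0 S)) ^ 2 /
    (subdet (sigmaR n D a) (insert i0 S) (insert i0 S) *
      subdet (sigmaR n D a) (insert j0 S) (insert j0 S))

/-- The edge set of the graph of the example, vertices `1,…,5` encoded as `0,…,4 : Fin 5`. -/
def Dex : Finset (Fin 5 × Fin 5) :=
  {(0, 2), (0, 3), (1, 2), (1, 3), (2, 4), (3, 4)}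

/-- The parameter values `a₁₃ = −3, a₁₄ = −2, a₂₃ = 8, a₂₄ = 10, a₃₅ = 2, a₄₅ = 0`. -/
def aex : {e // e ∈ Dex} → ℝ := fun e =>
  if e.val = ((0 : Fin 5), (2 : Fin 5)) then -3
  else if e.val = ((0 : Fin 5), (3 : Fin 5)) then -2
  else if e.val = ((1 : Fin 5), (2 : Fin 5)) then 8
  else if e.val = ((1 : Fin 5), (3 : Fin 5)) then 10
  else if e.val = ((2 : Fin 5), (4 : Fin 5)) then 2
  else 0

theorem sigmaR_eq_transpose_mul {n : ℕ} {D : Finset (Fin n × Fin n)} {a : {e // e ∈ D} → ℝ}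
    {B : Matrix (Fin n) (Fin n) ℝ} (hB : (1 - edgeMatrixR n D a) * B = 1) :
    sigmaR n D a = Bᵀ * B := by
  rw [sigmaR, ← transpose_nonsing_inv, inv_eq_right_inv hB]

section Subdet

variable {α : Type*} [CommRing α] {n : ℕ}

theorem subdet_eq_det_submatrix (M : Matrix (Fin n) (Fin n) α) {I J : Finset (Fin n)} {k : ℕ}
    {v w : Fin k → Fin n} (hv : StrictMono v) (hw : StrictMono w) (hvI : ∀ x, v x ∈ I)
    (hwJ : ∀ x, w x ∈ J) (hI : I.card = k) (hJ : J.card = k) :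
    subdet M I J = (M.submatrix v w).det := by
  have enum {K : Finset (Fin n)} {u : Fin k → Fin n} (hu : StrictMono u) (huK : ∀ x, u x ∈ K)
      (hK : K.card = k) : (fun p => (K.orderIsoOfFin hK p : Fin n)) = u := by
    funext p
    rw [Finset.coe_orderIsoOfFin_apply, Finset.orderEmbOfFin_unique hK huK hu]
  subst hI
  rw [subdet, dif_pos hJ.symm, enum hv hvI rfl, enum hw hwJ hJ]

theorem subdet_pair (M : Matrix (Fin n) (Fin n) α) {i j k l : Fin n} (hij : i < j)
    (hkl : k < l) :
    subdet M {i, j} {k, l} = M i k * M j l - M i l * M j k := by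
  rw [subdet_eq_det_submatrix M (v := ![i, j]) (w := ![k, l]), det_fin_two]
  · simp
  · exact Fin.strictMono_iff_lt_succ.2 (by simpa using hij)
  · exact Fin.strictMono_iff_lt_succ.2 (by simpa using hkl)
  · simp [Fin.forall_fin_two]
  · simp [Fin.forall_fin_two]
  · exact Finset.card_pair hij.ne
  · exact Finset.card_pair hkl.ne

theorem subdet_triple (M : Matrix (Fin n) (Fin n) α) {i j k l m p : Fin n} (hij : i < j)
    (hjk : j < k) (hlm : l < m) (hmp : m < p) :
    subdet M {i, j, k} {l, m, p} =
      !![M i l, M i m, M i p; M j l, M j m, M j p; M k l, M k m, M k p].det := by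
  rw [subdet_eq_det_submatrix M (v := ![i, j, k]) (w := ![l, m, p])]
  · congr 1; ext a b; fin_cases a <;> fin_cases b <;> rfl
  · exact Fin.strictMono_iff_lt_succ.2 (by simp [Fin.forall_fin_two, hij, hjk])
  · exact Fin.strictMono_iff_lt_succ.2 (by simp [Fin.forall_fin_two, hlm, hmp])
  · simp [Fin.forall_fin_succ]
  · simp [Fin.forall_fin_succ]
  · exact Finset.card_eq_three.2 ⟨i, j, k, hij.ne, (hij.trans hjk).ne, hjk.ne, rfl⟩
  · exact Finset.card_eq_three.2 ⟨l, m, p, hlm.ne, (hlm.trans hmp).ne, hmp.ne, rfl⟩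

end Subdet

theorem edgeMatrixR_Dex_aex :
    edgeMatrixR 5 Dex aex =
      !![0, 0, -3, -2, 0; 0, 0, 8, 10, 0; 0, 0, 0, 0, 2; 0, 0, 0, 0, 0; 0, 0, 0, 0, 0] := by
  ext i j
  fin_cases i <;> fin_cases j <;> simp [edgeMatrixR, Dex, aex]

theorem sigmaR_Dex_aex :
    sigmaR 5 Dex aex =
      !![1, 0, -3, -2, -6; 0, 1, 8, 10, 16; -3, 8, 74, 86, 148; -2, 10, 86, 105, 172;
        -6, 16, 148, 172, 297] := by
  rw [sigmaR_eq_transpose_mul (B := !![1, 0, -3, -2, -6; 0, 1, 8, 10, 16; 0, 0, 1, 0, 2;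
    0, 0, 0, 1, 0; 0, 0, 0, 0, 1])]
  · ext i j
    fin_cases i <;> fin_cases j <;> simp [mul_apply, Fin.sum_univ_five] <;> norm_num
  · rw [edgeMatrixR_Dex_aex]
    ext i j
    fin_cases i <;> fin_cases j <;> simp [mul_apply, Fin.sum_univ_five, one_apply] <;> norm_num

/-- For the graph and parameters of the example, `pcor²(1,2 | {5}) = 1024/1189`,
`pcor²(1,2 | {3,4}) = 88/105`, and in particular `pcor²(1,2 | {5}) > pcor²(1,2 | {3,4})`. -/
theorem statement15 :
    pcor2 5 Dex aex 0 1 {4} = 1024 / 1189 ∧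
    pcor2 5 Dex aex 0 1 {2, 3} = 88 / 105 ∧
    pcor2 5 Dex aex 0 1 {2, 3} < pcor2 5 Dex aex 0 1 {4} := by
  have given_sink : pcor2 5 Dex aex 0 1 {4} = 1024 / 1189 := by
    rw [pcor2, sigmaR_Dex_aex, subdet_pair, subdet_pair, subdet_pair]
    · simp
      norm_num
    all_goals decide
  have given_middle : pcor2 5 Dex aex 0 1 {2, 3} = 88 / 105 := by
    rw [pcor2, sigmaR_Dex_aex, subdet_triple, subdet_triple, subdet_triple]
    · simp [det_fin_three]
      norm_num
    all_goals decide
  refine ⟨given_sink, given_middle, ?_⟩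
  rw [given_sink, given_middle]
  norm_num

end
end
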